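/- arXiv:1606.04925 — 7 statements merged into one kernel-verified Lean document; each statement's English description precedes it below -/
import Mathlib

section
/- Fix integers n ≥ k ≥ 3 and let the edges of K_n carry independent uniform [0,1] weights. Let α and β be two k-element vertex subsets sharing exactly ℓ vertices, where 2 ≤ ℓ ≤ k−1, so that the cliques on α and β share a = C(ℓ,2) edges and each has b = C(k,2) − C(ℓ,2) edges not in the other. Then for every w with 0 ≤ w ≤ 1, the probability that both cliques have total weight at most w equals (w^{a+2b}/(a+2b)!)·C(2b, b). -/
/-!
Split the edges into the shared block `A` and the private blocks `B`, `C`; the event is then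
`S_A + S_B ≤ w ∧ S_A + S_C ≤ w` for sums of independent uniform weights over disjoint blocks.
Below level `t ≤ 1` the upper constraint of the cube is invisible, so integrating out the
coordinates of a block `s` turns `(t - S_s)₊ ^ j / j!` into `t₊ ^ (j + |s|) / (j + |s|)!`.
Integrating out `C` and then `B` leaves `(w - S_A)₊ ^ b / b! · (w - S_A)₊ ^ b / b!`, which is
`C(2b, b) · (w - S_A)₊ ^ 2b / (2b)!`, and integrating out `A` gives
`C(2b, b) · w ^ (a + 2b) / (a + 2b)!`.
-/

open MeasureTheory

/-- Product measure on the edge weights of `K_n`: each edge (element of `Sym2 (Fin n)`)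
gets an independent uniform `[0,1]` weight. -/
noncomputable def edgeMeasure (n : ℕ) : Measure (Sym2 (Fin n) → ℝ) :=
  Measure.pi fun _ => volume.restrict (Set.Icc (0 : ℝ) 1)

/-- The weight of the clique on the vertex set `S`: the sum of the weights of the
edges with both endpoints in `S`. -/
noncomputable def cliqueWeight {n : ℕ} (S : Finset (Fin n)) (ω : Sym2 (Fin n) → ℝ) : ℝ :=
  ∑ e ∈ S.sym2.filter (fun e => ¬ e.IsDiag), ω e

open Finset Function
open scoped ENNReal Nat

noncomputable def simplexVolume (j : ℕ) (t : ℝ) : ℝ := if 0 ≤ t then t ^ j / j ! else 0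

lemma simplexVolume_nonneg (j : ℕ) (t : ℝ) : 0 ≤ simplexVolume j t := by
  unfold simplexVolume; split <;> positivity

@[fun_prop]
lemma measurable_simplexVolume (j : ℕ) : Measurable (simplexVolume j) :=
  Measurable.ite measurableSet_Ici (by fun_prop) measurable_const

lemma simplexVolume_of_nonneg (j : ℕ) {t : ℝ} (ht : 0 ≤ t) :
    simplexVolume j t = t ^ j / j ! := if_pos ht

lemma simplexVolume_mul_simplexVolume (b c : ℕ) (t : ℝ) :
    simplexVolume b t * simplexVolume c t = (b + c).choose b * simplexVolume (b + c) t := by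
  unfold simplexVolume
  split
  · have h : ((b + c).choose b * b ! * c ! : ℝ) = (b + c)! := by
      exact_mod_cast Nat.choose_symm_add ▸ Nat.add_choose_mul_factorial_mul_factorial b c
    have : ((b + c).choose b : ℝ) ≠ 0 := by
      exact_mod_cast (Nat.choose_pos (Nat.le_add_right b c)).ne'
    rw [← h, pow_add]
    field_simp
  · simp

lemma simplexVolume_sub_eq_indicator (j : ℕ) (t u : ℝ) :
    ENNReal.ofReal (simplexVolume j (t - u)) =
      (Set.Iic t).indicator (fun u => ENNReal.ofReal ((t - u) ^ j / j !)) u := by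
  simp only [simplexVolume, Set.indicator_apply, Set.mem_Iic, sub_nonneg]
  split_ifs <;> simp

lemma lintegral_simplexVolume_sub (j : ℕ) {t : ℝ} (ht : t ≤ 1) :
    ∫⁻ u in Set.Icc 0 1, ENNReal.ofReal (simplexVolume j (t - u))
      = ENNReal.ofReal (simplexVolume (j + 1) t) := by
  simp_rw [simplexVolume_sub_eq_indicator, lintegral_indicator measurableSet_Iic,
    Measure.restrict_restrict measurableSet_Iic,
    show Set.Iic t ∩ Set.Icc 0 1 = Set.Icc 0 t by grind]
  rcases lt_or_ge t 0 with h0 | h0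
  · simp [simplexVolume, h0.not_ge]
  have hint : IntegrableOn (fun u => (t - u) ^ j / j !) (Set.Icc 0 t) :=
    (by fun_prop : Continuous fun u : ℝ => (t - u) ^ j / j !).integrableOn_Icc
  rw [← ofReal_integral_eq_lintegral_ofReal hint
      (ae_restrict_of_forall_mem measurableSet_Icc fun u hu => by
        have : 0 ≤ t - u := sub_nonneg.2 hu.2
        positivity),
    integral_Icc_eq_integral_Ioc, ← intervalIntegral.integral_of_le h0,
    intervalIntegral.integral_div, intervalIntegral.integral_comp_sub_left (fun v => v ^ j),
    integral_pow, simplexVolume_of_nonneg _ h0, Nat.factorial_succ]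
  congr 1
  push_cast
  field_simp
  ring

local notation "μ₀" => volume.restrict (Set.Icc (0 : ℝ) 1)

instance : IsProbabilityMeasure μ₀ := ⟨by simp⟩

section Marginal

variable {ι : Type*}

lemma measurable_ofReal_simplexVolume_sub_sum (s : Finset ι) (j : ℕ) (t : ℝ) :
    Measurable fun y : ι → ℝ => ENNReal.ofReal (simplexVolume j (t - ∑ e ∈ s, y e)) := by
  fun_prop

variable [DecidableEq ι]

lemma sum_updateFinset_of_disjoint {s t : Finset ι} (h : Disjoint s t) (x : ι → ℝ)
    (y : t → ℝ) : ∑ e ∈ s, updateFinset x t y e = ∑ e ∈ s, x e :=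
  sum_congr rfl fun e he => by simp [updateFinset, disjoint_left.mp h he]

theorem lmarginal_simplexVolume_sub_sum (s : Finset ι) (j : ℕ) {t : ℝ} (ht : t ≤ 1)
    (x : ι → ℝ) :
    (∫⋯∫⁻_s, (fun y => ENNReal.ofReal (simplexVolume j (t - ∑ e ∈ s, y e)))
        ∂fun _ => μ₀) x
      = ENNReal.ofReal (simplexVolume (j + #s) t) := by
  induction s using Finset.induction_on generalizing t with
  | empty => simp
  | insert i s hi ih =>
    rw [lmarginal_insert _ (measurable_ofReal_simplexVolume_sub_sum _ j t) hi,
      card_insert_of_notMem hi, ← add_assoc, ← lintegral_simplexVolume_sub _ ht]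
    refine setLIntegral_congr_fun measurableSet_Icc fun u hu => ?_
    have hshift : (fun y : ι → ℝ =>
          ENNReal.ofReal (simplexVolume j (t - ∑ e ∈ insert i s, y e))) ∘ (update · i u)
        = fun y => ENNReal.ofReal (simplexVolume j (t - u - ∑ e ∈ s, y e)) := by
      ext y
      simp [sum_insert hi, sum_update_of_notMem hi, sub_sub]
    rw [lmarginal_update_of_notMem (measurable_ofReal_simplexVolume_sub_sum _ j t) hi, hshift,
      ih (by linarith [hu.1])]

theorem lmarginal_eq_mul_simplexVolume {F : (ι → ℝ) → ℝ≥0∞} {s : Finset ι} {x : ι → ℝ}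
    {c : ℝ≥0∞} {j : ℕ} {t : ℝ} (ht : t ≤ 1)
    (hF : ∀ᵐ y ∂(Measure.pi fun _ : s => μ₀), F (updateFinset x s y) =
      c * ENNReal.ofReal (simplexVolume j (t - ∑ e ∈ s, updateFinset x s y e))) :
    (∫⋯∫⁻_s, F ∂fun _ => μ₀) x
      = c * ENNReal.ofReal (simplexVolume (j + #s) t) := by
  have hm : Measurable fun y : s → ℝ =>
      ENNReal.ofReal (simplexVolume j (t - ∑ e ∈ s, updateFinset x s y e)) :=
    (measurable_ofReal_simplexVolume_sub_sum s j t).comp measurable_updateFinset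
  rw [lmarginal, lintegral_congr_ae hF, lintegral_const_mul _ hm,
    ← lmarginal_simplexVolume_sub_sum s j ht x]
  rfl

end Marginal

lemma MeasureTheory.Measure.pi_apply_eq_of_lmarginal_indicator_eq_const {ι : Type*}
    [Fintype ι] [DecidableEq ι] {X : ι → Type*} [∀ i, MeasurableSpace (X i)]
    {μ : ∀ i, Measure (X i)} [∀ i, IsProbabilityMeasure (μ i)] {S : Set (∀ i, X i)}
    (hS : MeasurableSet S) (s : Finset ι) {c : ℝ≥0∞} (h : ∫⋯∫⁻_s, S.indicator 1 ∂μ = fun _ => c) :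
    Measure.pi μ S = c := by
  have hc : (fun _ => c) = ∫⋯∫⁻_s, (fun _ => c) ∂μ := by
    ext x
    simp [lmarginal]
  rw [← lintegral_indicator_one hS, lintegral_eq_of_lmarginal_eq s
    (measurable_one.indicator hS) measurable_const (h.trans hc), lintegral_const, measure_univ,
    mul_one]

theorem measure_sum_add_sum_le_and_sum_add_sum_le {ι : Type*} [Fintype ι] {A B C : Finset ι}
    (hAB : Disjoint A B) (hAC : Disjoint A C) (hBC : Disjoint B C) {w : ℝ} (hw0 : 0 ≤ w)
    (hw1 : w ≤ 1) :
    Measure.pi (fun _ : ι => μ₀)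
        {x | ∑ e ∈ A, x e + ∑ e ∈ B, x e ≤ w ∧ ∑ e ∈ A, x e + ∑ e ∈ C, x e ≤ w}
      = ENNReal.ofReal (w ^ (#A + (#B + #C)) / (#A + (#B + #C))! * (#B + #C).choose #B) := by
  classical
  set S := {x : ι → ℝ | ∑ e ∈ A, x e + ∑ e ∈ B, x e ≤ w ∧ ∑ e ∈ A, x e + ∑ e ∈ C, x e ≤ w}
  have hS : MeasurableSet S := by measurability
  have hind (x : ι → ℝ) : S.indicator 1 x =
      ENNReal.ofReal (simplexVolume 0 (w - ∑ e ∈ A, x e - ∑ e ∈ B, x e)) *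
        ENNReal.ofReal (simplexVolume 0 (w - ∑ e ∈ A, x e - ∑ e ∈ C, x e)) := by
    simp only [S, Set.indicator_apply, Set.mem_ofPred_eq, simplexVolume, sub_sub, sub_nonneg]
    split_ifs <;> simp_all
  have hmargC (x : ι → ℝ) (hx : 0 ≤ ∑ e ∈ A, x e) :
      (∫⋯∫⁻_C, S.indicator 1 ∂fun _ => μ₀) x =
      ENNReal.ofReal (simplexVolume 0 (w - ∑ e ∈ A, x e - ∑ e ∈ B, x e)) *
        ENNReal.ofReal (simplexVolume #C (w - ∑ e ∈ A, x e)) := by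
    rw [← zero_add #C]
    refine lmarginal_eq_mul_simplexVolume (by linarith) (ae_of_all _ fun y => ?_)
    rw [hind, sum_updateFinset_of_disjoint hAC, sum_updateFinset_of_disjoint hBC]
  have hmargBC (x : ι → ℝ) (hx : 0 ≤ ∑ e ∈ A, x e) :
      (∫⋯∫⁻_B ∪ C, S.indicator 1 ∂fun _ => μ₀) x =
      ENNReal.ofReal ((#B + #C).choose #B) *
        ENNReal.ofReal (simplexVolume (#B + #C) (w - ∑ e ∈ A, x e)) := by
    rw [lmarginal_union _ _ (measurable_one.indicator hS) hBC]
    set t := w - ∑ e ∈ A, x e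
    calc (∫⋯∫⁻_B, ∫⋯∫⁻_C, S.indicator 1 ∂fun _ => μ₀ ∂fun _ => μ₀) x
        = ENNReal.ofReal (simplexVolume #C t) *
            ENNReal.ofReal (simplexVolume (0 + #B) t) := by
          refine lmarginal_eq_mul_simplexVolume (by linarith) (ae_of_all _ fun y => ?_)
          have hA := sum_updateFinset_of_disjoint hAB x y
          rw [hmargC _ (hA ▸ hx), hA, mul_comm]
      _ = _ := by
          rw [zero_add, ← ENNReal.ofReal_mul (simplexVolume_nonneg _ _),
            ← ENNReal.ofReal_mul (by positivity), mul_comm, simplexVolume_mul_simplexVolume]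
  have hmarg : ∫⋯∫⁻_A ∪ (B ∪ C), S.indicator 1 ∂(fun _ => μ₀) = fun _ =>
      ENNReal.ofReal ((#B + #C).choose #B) *
        ENNReal.ofReal (simplexVolume (#B + #C + #A) w) := by
    ext x
    rw [lmarginal_union _ _ (measurable_one.indicator hS)
      (disjoint_union_right.2 ⟨hAB, hAC⟩)]
    refine lmarginal_eq_mul_simplexVolume hw1 ?_
    have hcube : ∀ᵐ y ∂Measure.pi (fun _ : A => μ₀), ∀ i, y i ∈ Set.Icc 0 1 :=
      ae_all_iff.2 fun _ =>
        Measure.tendsto_eval_ae_ae.eventually (ae_restrict_mem measurableSet_Icc)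
    filter_upwards [hcube] with y hy
    refine hmargBC _ (sum_nonneg fun e he => ?_)
    simp only [updateFinset, dif_pos he]
    exact (hy ⟨e, he⟩).1
  rw [Measure.pi_apply_eq_of_lmarginal_indicator_eq_const hS _ hmarg,
    ← ENNReal.ofReal_mul (by positivity), simplexVolume_of_nonneg _ hw0, mul_comm,
    add_comm (#B + #C)]

section Cliques

variable {V : Type*} [DecidableEq V]

def cliqueEdges (S : Finset V) : Finset (Sym2 V) := S.sym2.filter fun e => ¬ e.IsDiag

lemma card_cliqueEdges (S : Finset V) : #(cliqueEdges S) = (#S).choose 2 := by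
  rw [cliqueEdges, sym2_eq_image, Sym2.filter_image_mk_not_isDiag, Sym2.card_image_offDiag]

lemma cliqueEdges_inter (S T : Finset V) :
    cliqueEdges (S ∩ T) = cliqueEdges S ∩ cliqueEdges T := by
  ext e
  simp only [cliqueEdges, mem_filter, mem_inter, mem_sym2_iff]
  grind

end Cliques

theorem statement8_general (n k ℓ : ℕ)
    (α β : Finset (Fin n)) (hα : α.card = k) (hβ : β.card = k)
    (hshared : (α ∩ β).card = ℓ)
    (w : ℝ) (hw0 : 0 ≤ w) (hw1 : w ≤ 1) :
    ((edgeMeasure n) {ω | cliqueWeight α ω ≤ w ∧ cliqueWeight β ω ≤ w}).toReal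
      = w ^ (ℓ.choose 2 + 2 * (k.choose 2 - ℓ.choose 2)) /
          ((ℓ.choose 2 + 2 * (k.choose 2 - ℓ.choose 2)).factorial : ℝ) *
        ((2 * (k.choose 2 - ℓ.choose 2)).choose (k.choose 2 - ℓ.choose 2) : ℝ) := by
  set Eα := cliqueEdges α
  set Eβ := cliqueEdges β
  have hshared_edges : #(Eα ∩ Eβ) = ℓ.choose 2 := by
    rw [← cliqueEdges_inter, card_cliqueEdges, hshared]
  have hα_only : #(Eα \ Eβ) = k.choose 2 - ℓ.choose 2 := by
    rw [card_sdiff, inter_comm, hshared_edges, card_cliqueEdges, hα]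
  have hβ_only : #(Eβ \ Eα) = k.choose 2 - ℓ.choose 2 := by
    rw [card_sdiff, hshared_edges, card_cliqueEdges, hβ]
  have hset : {ω | cliqueWeight α ω ≤ w ∧ cliqueWeight β ω ≤ w} =
      {x | ∑ e ∈ Eα ∩ Eβ, x e + ∑ e ∈ Eα \ Eβ, x e ≤ w ∧
        ∑ e ∈ Eα ∩ Eβ, x e + ∑ e ∈ Eβ \ Eα, x e ≤ w} := by
    simp_rw [sum_inter_add_sum_sdiff, inter_comm Eα Eβ, sum_inter_add_sum_sdiff]
    rfl
  rw [edgeMeasure, hset, measure_sum_add_sum_le_and_sum_add_sum_le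
      (disjoint_sdiff_inter Eα Eβ).symm (disjoint_sdiff.mono_left inter_subset_left)
      disjoint_sdiff_sdiff hw0 hw1,
    ENNReal.toReal_ofReal (by positivity), hshared_edges, hα_only, hβ_only, two_mul]

theorem statement8 (n k ℓ : ℕ) (hk : 3 ≤ k) (hkn : k ≤ n)
    (hl2 : 2 ≤ ℓ) (hlk : ℓ ≤ k - 1)
    (α β : Finset (Fin n)) (hα : α.card = k) (hβ : β.card = k)
    (hshared : (α ∩ β).card = ℓ)
    (w : ℝ) (hw0 : 0 ≤ w) (hw1 : w ≤ 1) :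
    ((edgeMeasure n) {ω | cliqueWeight α ω ≤ w ∧ cliqueWeight β ω ≤ w}).toReal
      = w ^ (ℓ.choose 2 + 2 * (k.choose 2 - ℓ.choose 2)) /
          ((ℓ.choose 2 + 2 * (k.choose 2 - ℓ.choose 2)).factorial : ℝ) *
        ((2 * (k.choose 2 - ℓ.choose 2)).choose (k.choose 2 - ℓ.choose 2) : ℝ) :=
  statement8_general n k ℓ α β hα hβ hshared w hw0 hw1
end

section
/- Fix integers k ≥ 5 and n ≥ 1, let 0 < w ≤ exp(−(k−1)/(k−2)), set m = C(k,2), p = w^m/m!, m_ℓ = C(k,2) − C(ℓ,2), and v_ℓ = C(k,ℓ)·(n^{k−ℓ}/(k−ℓ)!)·p·(w^{m_ℓ}/(k−1)!). Then for every ℓ with 3 ≤ ℓ ≤ k−2, v_ℓ² ≤ v_{ℓ−1}·v_{ℓ+1}; that is, the sequence (v_ℓ) is log-convex on 2 ≤ ℓ ≤ k−1. -/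
lemma keylem (d c : ℕ) (w : ℝ) (hw0 : 0 < w)
    (hw1 : w ≤ Real.exp (-(((d:ℝ)+5+(c:ℝ)) - 1) / (((d:ℝ)+5+(c:ℝ)) - 2))) :
    w ≤ ((d:ℝ)+3) * ((c:ℝ)+2)^2 / (((d:ℝ)+4) * ((c:ℝ)+3)^2) := by
  have hcomm : ((d:ℝ)+5+(c:ℝ)) = ((d:ℝ)+(c:ℝ)+5) := by ring
  rw [hcomm] at hw1
  set x : ℝ := (d:ℝ) with hx
  set y : ℝ := (c:ℝ) with hy
  have hx0 : 0 ≤ x := Nat.cast_nonneg d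
  have hy0 : 0 ≤ y := Nat.cast_nonneg c
  have hs0 : (0:ℝ) < x + y + 3 := by positivity
  have h1 : (-((x+y+5) - 1) / ((x+y+5) - 2)) = -1 + -(1/(x+y+3)) := by
    have hd : (x+y+5) - 2 = x+y+3 := by ring
    rw [hd, div_eq_iff (ne_of_gt hs0)]
    field_simp
    ring
  have h2 : Real.exp (-((x+y+5) - 1) / ((x+y+5) - 2))
      = Real.exp (-1) * Real.exp (-(1/(x+y+3))) := by
    rw [h1, Real.exp_add]
  have hb : 1/(x+y+3) + 1 ≤ Real.exp (1/(x+y+3)) := Real.add_one_le_exp _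
  have h3 : Real.exp (-(1/(x+y+3))) ≤ (x+y+3)/(x+y+4) := by
    rw [Real.exp_neg, inv_le_iff_one_le_mul₀ (Real.exp_pos _)]
    calc (1:ℝ) = ((x+y+3)/(x+y+4)) * ((x+y+4)/(x+y+3)) := by field_simp
      _ ≤ ((x+y+3)/(x+y+4)) * Real.exp (1/(x+y+3)) := by
          apply mul_le_mul_of_nonneg_left _ (by positivity)
          have h4 : (x+y+4)/(x+y+3) = 1/(x+y+3) + 1 := by
            rw [div_eq_iff (ne_of_gt hs0)]
            field_simp
            ring
          rw [h4]
          exact hb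
  have he : (2.7182818283 : ℝ) < Real.exp 1 := Real.exp_one_gt_d9
  have hbig : Real.exp (-1) * ((x+y+3)/(x+y+4)) ≤ (x+3)*(y+2)^2/((x+4)*(y+3)^2) := by
    rw [Real.exp_neg, inv_mul_eq_div, div_div, div_le_div_iff₀ (by positivity) (by positivity)]
    have hpoly : 4*((x+y+3)*((x+4)*(y+3)^2)) ≤ 9*((x+y+4)*((x+3)*(y+2)^2)) := by
      nlinarith [hy0, mul_nonneg hy0 hy0, mul_nonneg (mul_nonneg hy0 hy0) hy0,
        mul_nonneg hx0 hy0, mul_nonneg (mul_nonneg hx0 hy0) hy0,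
        mul_nonneg (mul_nonneg (mul_nonneg hx0 hy0) hy0) hy0,
        mul_nonneg (mul_nonneg hx0 hx0) hy0,
        mul_nonneg (mul_nonneg (mul_nonneg hx0 hx0) hy0) hy0]
    have hprod : (0:ℝ) ≤ (x+y+4)*((x+3)*(y+2)^2) := by positivity
    nlinarith [mul_le_mul_of_nonneg_left (le_of_lt he) hprod]
  calc w ≤ Real.exp (-((x+y+5)-1)/((x+y+5)-2)) := hw1
    _ = Real.exp (-1) * Real.exp (-(1/(x+y+3))) := h2
    _ ≤ Real.exp (-1) * ((x+y+3)/(x+y+4)) :=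
        mul_le_mul_of_nonneg_left h3 (le_of_lt (Real.exp_pos _))
    _ ≤ _ := hbig

lemma algebra_step {a b : ℝ} (x w r : ℝ) (hw0 : 0 < w) (hle : w ≤ r)
    (hx : 0 ≤ x) (h1 : a = x * w) (h2 : b = x * r) : a ≤ b := by
  rw [h1, h2]
  exact mul_le_mul_of_nonneg_left hle hx

/-- The quantity `v_ℓ = C(k,ℓ) · (n^{k−ℓ}/(k−ℓ)!) · p · (w^{m_ℓ}/(k−1)!)`, where
`p = w^m/m!`, `m = C(k,2)` and `m_ℓ = C(k,2) − C(ℓ,2)`. -/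
noncomputable def vSeq (k n : ℕ) (w : ℝ) (ℓ : ℕ) : ℝ :=
  (k.choose ℓ : ℝ) * ((n : ℝ) ^ (k - ℓ) / ((k - ℓ).factorial : ℝ)) *
    (w ^ k.choose 2 / ((k.choose 2).factorial : ℝ)) *
    (w ^ (k.choose 2 - ℓ.choose 2) / ((k - 1).factorial : ℝ))

theorem statement10 (k n : ℕ) (hk : 5 ≤ k) (hn : 1 ≤ n)
    (w : ℝ) (hw0 : 0 < w)
    (hw1 : w ≤ Real.exp (-((k : ℝ) - 1) / ((k : ℝ) - 2))) :
    ∀ ℓ, 3 ≤ ℓ → ℓ ≤ k - 2 →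
      (vSeq k n w ℓ) ^ 2 ≤ vSeq k n w (ℓ - 1) * vSeq k n w (ℓ + 1) := by
  intro ℓ h3 hlk
  obtain ⟨d, rfl⟩ : ∃ d, ℓ = d + 3 := ⟨ℓ - 3, by omega⟩
  obtain ⟨c, rfl⟩ : ∃ c, k = d + 5 + c := ⟨k - (d + 5), by omega⟩
  -- transported exponential bound
  have hw1' : w ≤ Real.exp (-(((d:ℝ)+5+(c:ℝ)) - 1) / (((d:ℝ)+5+(c:ℝ)) - 2)) := by
    push_cast at hw1
    exact hw1
  have hkey := keylem d c w hw0 hw1'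
  -- choose number facts
  have hA4 : (d+4).choose 2 ≤ (d+5+c).choose 2 := Nat.choose_le_choose 2 (by omega)
  have hA3 : (d+4).choose 2 = (d+3).choose 2 + (d+3) := by
    rw [show d+4 = (d+3)+1 from rfl, Nat.choose_succ_succ]
    simp [Nat.choose_one_right]
    omega
  have hA2 : (d+3).choose 2 = (d+2).choose 2 + (d+2) := by
    rw [show d+3 = (d+2)+1 from rfl, Nat.choose_succ_succ]
    simp [Nat.choose_one_right]
    omega
  have hE0 : (d+5+c).choose 2 - (d+3).choose 2
      = ((d+5+c).choose 2 - (d+4).choose 2) + (d+3) := by omega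
  have hE1 : (d+5+c).choose 2 - (d+2).choose 2
      = ((d+5+c).choose 2 - (d+4).choose 2) + (d+3) + (d+2) := by omega
  -- binomial coefficient identities
  have id1 : (d+5+c).choose (d+3) * (d+3) = (d+5+c).choose (d+2) * (c+3) := by
    have := Nat.choose_succ_right_eq (d+5+c) (d+2)
    rw [show d+5+c-(d+2) = c+3 from by omega] at this
    simpa using this
  have id2 : (d+5+c).choose (d+4) * (d+4) = (d+5+c).choose (d+3) * (c+2) := by
    have := Nat.choose_succ_right_eq (d+5+c) (d+3)
    rw [show d+5+c-(d+3) = c+2 from by omega] at this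
    simpa using this
  have hC2 : (((d+5+c).choose (d+2) : ℕ) : ℝ)
      = (((d+5+c).choose (d+3) : ℕ) : ℝ) * ((d:ℝ)+3) / ((c:ℝ)+3) := by
    have h' : (((d+5+c).choose (d+3) : ℕ) : ℝ) * ((d:ℝ)+3)
        = (((d+5+c).choose (d+2) : ℕ) : ℝ) * ((c:ℝ)+3) := by exact_mod_cast id1
    field_simp
    linarith
  have hC4 : (((d+5+c).choose (d+4) : ℕ) : ℝ)
      = (((d+5+c).choose (d+3) : ℕ) : ℝ) * ((c:ℝ)+2) / ((d:ℝ)+4) := by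
    have h' : (((d+5+c).choose (d+4) : ℕ) : ℝ) * ((d:ℝ)+4)
        = (((d+5+c).choose (d+3) : ℕ) : ℝ) * ((c:ℝ)+2) := by exact_mod_cast id2
    field_simp
    linarith
  -- factorial identities over ℝ
  have hf3 : (((c+3).factorial : ℕ) : ℝ) = ((c:ℝ)+3) * ((c:ℝ)+2) * ((c+1).factorial : ℝ) := by
    rw [show c+3 = (c+2)+1 from rfl, Nat.factorial_succ, show c+2 = (c+1)+1 from rfl,
      Nat.factorial_succ]
    push_cast
    ring
  have hf2 : (((c+2).factorial : ℕ) : ℝ) = ((c:ℝ)+2) * ((c+1).factorial : ℝ) := by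
    rw [show c+2 = (c+1)+1 from rfl, Nat.factorial_succ]
    push_cast
    ring
  -- nonzeroness
  have hF1 : ((c+1).factorial : ℝ) ≠ 0 := Nat.cast_ne_zero.mpr (Nat.factorial_ne_zero _)
  have hMF : (((d+5+c).choose 2).factorial : ℝ) ≠ 0 := Nat.cast_ne_zero.mpr (Nat.factorial_ne_zero _)
  have hKF : ((d+4+c).factorial : ℝ) ≠ 0 := Nat.cast_ne_zero.mpr (Nat.factorial_ne_zero _)
  have hwne : w ≠ 0 := ne_of_gt hw0
  -- unfold and normalize
  simp only [vSeq, show d+3-1 = d+2 from by omega, show d+3+1 = d+4 from by omega,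
    show d+5+c-(d+3) = c+2 from by omega, show d+5+c-(d+2) = c+3 from by omega,
    show d+5+c-(d+4) = c+1 from by omega, show d+5+c-1 = d+4+c from by omega]
  rw [hE0, hE1, hC2, hC4, hf3, hf2]
  refine algebra_step
    ((((d+5+c).choose (d+3) : ℕ) : ℝ)^2 * ((n:ℝ)^(c+2))^2 * (w ^ ((d+5+c).choose 2))^2 *
      (w ^ ((d+5+c).choose 2 - (d+4).choose 2))^2 * w^(2*d+5) /
      ((((c:ℝ)+2) * ((c+1).factorial : ℝ))^2 * ((((d+5+c).choose 2).factorial : ℝ))^2 *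
        (((d+4+c).factorial : ℝ))^2))
    w (((d:ℝ)+3) * ((c:ℝ)+2)^2 / (((d:ℝ)+4) * ((c:ℝ)+3)^2)) hw0 hkey ?_ ?_ ?_
  · positivity
  · field_simp
    ring
  · field_simp
    ring
end

section
/- Fix integers k ≥ 3 and n ≥ 1, let 0 < w ≤ n^{−2/k}, set m = C(k,2), p = w^m/m!, m_ℓ = C(k,2) − C(ℓ,2), and v_ℓ = C(k,ℓ)·(n^{k−ℓ}/(k−ℓ)!)·p·(w^{m_ℓ}/(k−1)!). Then v_2/v_{k−1} = ((k−1)/(2·(k−2)!))·(n·w^{k/2})^{k−3} ≤ 1, so v_2 ≤ v_{k−1}. -/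
theorem statement11 (k n : ℕ) (hk : 3 ≤ k) (hn : 1 ≤ n)
    (w : ℝ) (hw0 : 0 < w) (hw1 : w ≤ (n : ℝ) ^ (-(2 / (k : ℝ)))) :
    vSeq k n w 2 / vSeq k n w (k - 1)
        = (((k : ℝ) - 1) / (2 * ((k - 2).factorial : ℝ))) *
            ((n : ℝ) * w ^ ((k : ℝ) / 2)) ^ (k - 3) ∧
      (((k : ℝ) - 1) / (2 * ((k - 2).factorial : ℝ))) *
          ((n : ℝ) * w ^ ((k : ℝ) / 2)) ^ (k - 3) ≤ 1 ∧
      vSeq k n w 2 ≤ vSeq k n w (k - 1) := by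
  obtain ⟨j, rfl⟩ : ∃ j, k = j + 3 := ⟨k - 3, by omega⟩
  have hn0 : (0 : ℝ) < n := by exact_mod_cast hn
  -- basic natural number identities
  have heven : Even ((j + 3) * (j + 2)) := by
    simpa [Nat.mul_comm] using Nat.even_mul_succ_self (j + 2)
  have hc2 : 2 * (j + 3).choose 2 = (j + 3) * (j + 2) := by
    rw [Nat.choose_two_right]
    have h : (j + 3) - 1 = j + 2 := rfl
    rw [h]
    exact Nat.mul_div_cancel' heven.two_dvd
  have hevent : Even (j * (j + 3)) := by
    rcases Nat.even_or_odd j with h | h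
    · exact h.mul_right _
    · exact ((h.add_odd (by decide)).mul_left _)
  set t : ℕ := j * (j + 3) / 2 with ht
  have ht2 : 2 * t = j * (j + 3) := Nat.mul_div_cancel' hevent.two_dvd
  have hct : (j + 3).choose 2 = t + (j + 3) :=
    Nat.eq_of_mul_eq_mul_left two_pos (by rw [Nat.mul_add, ht2, hc2]; ring)
  have hsub1 : (j + 3).choose 2 - Nat.choose 2 2 = t + j + 2 := by
    simp [Nat.choose_self, hct]
    omega
  have hsubk : (j + 3).choose 2 - (j + 2).choose 2 = j + 2 := by
    have h : (j + 3).choose 2 = (j + 2) + (j + 2).choose 2 := by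
      rw [Nat.choose_succ_succ, Nat.choose_one_right]
    rw [h, Nat.add_sub_cancel]
  have hchoosek : (j + 3).choose (j + 2) = j + 3 := Nat.choose_succ_self_right _
  have hCc : ((j + 3).choose 2 : ℝ) = ((j : ℝ) + 3) * ((j : ℝ) + 2) / 2 := by
    have h := congrArg (Nat.cast : ℕ → ℝ) hc2
    push_cast at h
    linarith
  -- rpow computation
  have hwt : ((n : ℝ) * w ^ (((j + 3 : ℕ) : ℝ) / 2)) ^ j = (n : ℝ) ^ j * w ^ t := by
    rw [mul_pow]
    congr 1
    rw [← Real.rpow_natCast (w ^ _) j, ← Real.rpow_mul hw0.le, ← Real.rpow_natCast w t]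
    congr 1
    have h2t : (2 : ℝ) * t = (j : ℝ) * ((j : ℝ) + 3) := by
      have h := congrArg (Nat.cast : ℕ → ℝ) ht2
      push_cast at h
      linarith
    push_cast
    field_simp
    linarith
  -- simplification facts
  have h1 : j + 3 - 2 = j + 1 := rfl
  have h2 : j + 3 - 1 = j + 2 := rfl
  have h3 : j + 3 - (j + 2) = 1 := by omega
  have h4 : j + 3 - 3 = j := rfl
  have hvk : 0 < vSeq (j + 3) n w (j + 2) := by
    unfold vSeq
    rw [hchoosek, h3, h2, hsubk]
    positivity
  have hv2 : vSeq (j + 3) n w 2 =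
      (((j : ℝ) + 3) * ((j : ℝ) + 2) / 2) * ((n : ℝ) ^ (j + 1) / ((j + 1).factorial : ℝ)) *
        (w ^ (j + 3).choose 2 / (((j + 3).choose 2).factorial : ℝ)) *
        (w ^ (t + j + 2) / ((j + 2).factorial : ℝ)) := by
    unfold vSeq
    rw [h1, h2, hsub1, hCc]
  have hvkval : vSeq (j + 3) n w (j + 2) =
      ((j : ℝ) + 3) * ((n : ℝ) ^ 1 / 1) *
        (w ^ (j + 3).choose 2 / (((j + 3).choose 2).factorial : ℝ)) *
        (w ^ (j + 2) / ((j + 2).factorial : ℝ)) := by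
    unfold vSeq
    rw [hchoosek, h3, h2, hsubk]
    norm_num
  have hfac1 : (0 : ℝ) < ((j + 1).factorial : ℝ) := by exact_mod_cast (j + 1).factorial_pos
  -- the main equality
  have heq : vSeq (j + 3) n w 2 / vSeq (j + 3) n w (j + 2)
      = ((((j + 3 : ℕ) : ℝ) - 1) / (2 * (((j + 3) - 2).factorial : ℝ))) *
          ((n : ℝ) * w ^ (((j + 3 : ℕ) : ℝ) / 2)) ^ ((j + 3) - 3) := by
    rw [h1, h4, hv2, hvkval, hwt]
    have hwc : (0 : ℝ) < w ^ (j + 3).choose 2 := by positivity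
    have hfacc : (0 : ℝ) < (((j + 3).choose 2).factorial : ℝ) := by
      exact_mod_cast ((j + 3).choose 2).factorial_pos
    have hfac2 : (0 : ℝ) < ((j + 2).factorial : ℝ) := by exact_mod_cast (j + 2).factorial_pos
    rw [pow_add, pow_add, pow_succ]
    push_cast
    field_simp
    ring
  -- the bound
  have hbase : (n : ℝ) * w ^ (((j + 3 : ℕ) : ℝ) / 2) ≤ 1 := by
    have hK0 : (0 : ℝ) < ((j + 3 : ℕ) : ℝ) := by positivity
    have hmono : w ^ (((j + 3 : ℕ) : ℝ) / 2)
        ≤ ((n : ℝ) ^ (-(2 / ((j + 3 : ℕ) : ℝ)))) ^ (((j + 3 : ℕ) : ℝ) / 2) :=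
      Real.rpow_le_rpow hw0.le hw1 (by positivity)
    have hcalc : ((n : ℝ) ^ (-(2 / ((j + 3 : ℕ) : ℝ)))) ^ (((j + 3 : ℕ) : ℝ) / 2)
        = ((n : ℝ))⁻¹ := by
      rw [← Real.rpow_mul hn0.le]
      have : -(2 / ((j + 3 : ℕ) : ℝ)) * (((j + 3 : ℕ) : ℝ) / 2) = -1 := by
        field_simp
      rw [this, Real.rpow_neg_one]
    calc (n : ℝ) * w ^ (((j + 3 : ℕ) : ℝ) / 2)
        ≤ (n : ℝ) * ((n : ℝ))⁻¹ := by
          apply mul_le_mul_of_nonneg_left _ hn0.le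
          rw [← hcalc]; exact hmono
      _ = 1 := mul_inv_cancel₀ hn0.ne'
  have hbase0 : (0 : ℝ) ≤ (n : ℝ) * w ^ (((j + 3 : ℕ) : ℝ) / 2) := by positivity
  have hcoef : ((((j + 3 : ℕ) : ℝ) - 1) / (2 * (((j + 3) - 2).factorial : ℝ))) ≤ 1 := by
    rw [h1, div_le_one (by positivity)]
    have hsf : j + 1 ≤ (j + 1).factorial := Nat.self_le_factorial _
    have : ((j : ℝ) + 1) ≤ ((j + 1).factorial : ℝ) := by exact_mod_cast hsf
    push_cast
    linarith
  have hcoef0 : (0 : ℝ) ≤ ((((j + 3 : ℕ) : ℝ) - 1) / (2 * (((j + 3) - 2).factorial : ℝ))) := by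
    rw [h1]
    have hone : (1 : ℝ) ≤ ((j + 3 : ℕ) : ℝ) := by exact_mod_cast Nat.le_add_left 1 (j + 2)
    apply div_nonneg (by linarith)
    positivity
  have hle : ((((j + 3 : ℕ) : ℝ) - 1) / (2 * (((j + 3) - 2).factorial : ℝ))) *
      ((n : ℝ) * w ^ (((j + 3 : ℕ) : ℝ) / 2)) ^ ((j + 3) - 3) ≤ 1 := by
    have hpow : ((n : ℝ) * w ^ (((j + 3 : ℕ) : ℝ) / 2)) ^ ((j + 3) - 3) ≤ 1 :=
      pow_le_one₀ hbase0 hbase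
    have hpow0 : (0 : ℝ) ≤ ((n : ℝ) * w ^ (((j + 3 : ℕ) : ℝ) / 2)) ^ ((j + 3) - 3) := by
      positivity
    calc _ ≤ 1 * 1 := mul_le_mul hcoef hpow hpow0 (le_trans hcoef0 hcoef)
      _ = 1 := by norm_num
  refine ⟨heq, hle, ?_⟩
  exact (div_le_one hvk).mp (by rw [heq]; exact hle)
end

section
/- Fix integers k ≥ 3 and n ≥ 1, and let 0 < w ≤ min{ n^{−2/k}, exp(−(k−1)/(k−2)) }. Set m = C(k,2), p = w^m/m!, m_ℓ = C(k,2) − C(ℓ,2), and v_ℓ = C(k,ℓ)·(n^{k−ℓ}/(k−ℓ)!)·p·(w^{m_ℓ}/(k−1)!). Then over the range 2 ≤ ℓ ≤ k−1, v_ℓ is maximized at ℓ = k−1; that is, v_ℓ ≤ v_{k−1} for all 2 ≤ ℓ ≤ k−1. -/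
open Finset

private lemma fac_prod (ℓ : ℕ) : ∀ d : ℕ,
    (ℓ + d).factorial = ℓ.factorial * ∏ i ∈ Finset.range d, (ℓ + 1 + i)
  | 0 => by simp
  | (d+1) => by
      rw [Finset.prod_range_succ, ← mul_assoc, ← fac_prod ℓ d,
        show ℓ + (d+1) = (ℓ + d) + 1 by omega, Nat.factorial_succ]
      ring

private lemma two_mul_choose_two (m : ℕ) : 2 * m.choose 2 = m * (m - 1) := by
  rw [Nat.choose_two_right, Nat.mul_div_cancel']
  rcases Nat.even_or_odd m with h | h
  · exact Dvd.dvd.mul_right h.two_dvd _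
  · exact Dvd.dvd.mul_left (Nat.Odd.sub_odd h odd_one).two_dvd _

private lemma exp_ge (m : ℕ) : ((1:ℝ) + m/2)^2 ≤ Real.exp 1 ^ m := by
  rw [Real.exp_one_pow]
  have h1 : (m:ℝ)/2 + 1 ≤ Real.exp ((m:ℝ)/2) := Real.add_one_le_exp _
  have h2 : Real.exp ((m:ℝ)/2) * Real.exp ((m:ℝ)/2) = Real.exp (m:ℝ) := by
    rw [← Real.exp_add]; ring_nf
  nlinarith [Real.exp_pos ((m:ℝ)/2), Nat.cast_nonneg (α := ℝ) m]

private lemma prod_sq_le (m d : ℕ) :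
    (∏ i ∈ Finset.range d, ((m+3+i : ℕ):ℝ))^2
      ≤ ((d+1).factorial:ℝ)^4 * Real.exp 1 ^ (m*d) := by
  have hfac : ((d+1).factorial : ℝ) = ∏ i ∈ Finset.range d, ((2+i : ℕ):ℝ) := by
    rw [show d + 1 = 1 + d by omega, fac_prod 1 d]
    push_cast
    simp [Nat.factorial]
  have hsq : (∏ i ∈ Finset.range d, ((m+3+i : ℕ):ℝ))^2
      = ∏ i ∈ Finset.range d, (((m+3+i : ℕ):ℝ) * ((m+3+(d-1-i) : ℕ):ℝ)) := by
    rw [Finset.prod_mul_distrib, sq]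
    congr 1
    exact (Finset.prod_range_reflect (fun i => ((m+3+i : ℕ):ℝ)) d).symm
  have hrhs : ((d+1).factorial:ℝ)^4 * Real.exp 1 ^ (m*d)
      = ∏ i ∈ Finset.range d,
          (((2+i : ℕ):ℝ)^2 * ((2+(d-1-i) : ℕ):ℝ)^2 * Real.exp 1 ^ m) := by
    rw [Finset.prod_mul_distrib, Finset.prod_mul_distrib,
      Finset.prod_range_reflect (fun i => ((2+i : ℕ):ℝ)^2) d]
    simp only [Finset.prod_pow]
    rw [← hfac, Finset.prod_const, Finset.card_range, ← pow_mul]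
    ring
  rw [hsq, hrhs]
  apply Finset.prod_le_prod
  · intro i _; positivity
  · intro i hi
    rw [Finset.mem_range] at hi
    obtain ⟨j, rfl⟩ : ∃ j, d = i + 1 + j := ⟨d - i - 1, by omega⟩
    rw [show i + 1 + j - 1 - i = j by omega]
    have hexp := exp_ge m
    have hM : (0:ℝ) ≤ (m:ℝ) := Nat.cast_nonneg m
    have hI : (0:ℝ) ≤ (i:ℝ) := Nat.cast_nonneg i
    have hJ : (0:ℝ) ≤ (j:ℝ) := Nat.cast_nonneg j
    push_cast
    have hsum : ((m:ℝ)+3+i) + ((m:ℝ)+3+j) ≤ 2*((2+(i:ℝ))*(2+(j:ℝ))*(1+(m:ℝ)/2)) := by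
      nlinarith [mul_nonneg hI hJ, mul_nonneg hM hI, mul_nonneg hM hJ,
        mul_nonneg (mul_nonneg hM hI) hJ]
    have h2 : ((m:ℝ)+3+i) * ((m:ℝ)+3+j) ≤ ((2+(i:ℝ))*(2+(j:ℝ))*(1+(m:ℝ)/2))^2 := by
      nlinarith [sq_nonneg ((i:ℝ) - (j:ℝ)), hsum,
        mul_nonneg hI hJ, mul_nonneg hM hI, mul_nonneg hM hJ]
    calc ((m:ℝ)+3+i) * ((m:ℝ)+3+j)
        ≤ ((2+(i:ℝ))*(2+(j:ℝ))*(1+(m:ℝ)/2))^2 := h2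
      _ = ((2+(i:ℝ))^2*(2+(j:ℝ))^2) * (1+(m:ℝ)/2)^2 := by ring
      _ ≤ ((2+(i:ℝ))^2*(2+(j:ℝ))^2) * (Real.exp 1 ^ m) :=
          mul_le_mul_of_nonneg_left hexp (by positivity)
      _ = (2+(i:ℝ))^2*(2+(j:ℝ))^2 * Real.exp 1 ^ m := by ring



theorem statement12 (k n : ℕ) (hk : 3 ≤ k) (hn : 1 ≤ n)
    (w : ℝ) (hw0 : 0 < w)
    (hw1 : w ≤ min ((n : ℝ) ^ (-(2 / (k : ℝ))))
        (Real.exp (-((k : ℝ) - 1) / ((k : ℝ) - 2)))) :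
    ∀ ℓ, 2 ≤ ℓ → ℓ ≤ k - 1 → vSeq k n w ℓ ≤ vSeq k n w (k - 1) := by
  intro ℓ hl2 hlk
  obtain ⟨m, rfl⟩ : ∃ m, ℓ = m + 2 := ⟨ℓ - 2, by omega⟩
  obtain ⟨d, rfl⟩ : ∃ d, k = m + 2 + 1 + d := ⟨k - (m + 2) - 1, by omega⟩
  set K := m + 2 + 1 + d with hK
  set A : ℝ := ∏ i ∈ Finset.range d, ((m+3+i : ℕ):ℝ) with hA
  have hn0 : (0:ℝ) < (n:ℝ) := by exact_mod_cast hn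
  have hK3 : (3:ℝ) ≤ (K:ℝ) := by exact_mod_cast hk
  have hKpos : (0:ℝ) < (K:ℝ) := by linarith
  -- `w ≤ (exp 1)⁻¹`
  have hwe : w ≤ (Real.exp 1)⁻¹ := by
    refine (hw1.trans (min_le_right _ _)).trans ?_
    rw [← Real.exp_neg]
    apply Real.exp_le_exp.mpr
    rw [div_le_iff₀ (by linarith : (0:ℝ) < (K:ℝ) - 2)]
    linarith
  -- `w ^ K ≤ (n^2)⁻¹`
  have hwk : w ^ K ≤ ((n:ℝ)^2)⁻¹ := by
    have h1 : w ^ K ≤ ((n : ℝ) ^ (-(2 / (K : ℝ)))) ^ K :=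
      pow_le_pow_left₀ hw0.le (hw1.trans (min_le_left _ _)) K
    refine h1.trans_eq ?_
    rw [← Real.rpow_natCast ((n : ℝ) ^ (-(2 / (K : ℝ)))) K, ← Real.rpow_mul hn0.le]
    rw [show -(2 / (K:ℝ)) * (K:ℕ) = -2 by field_simp]
    rw [Real.rpow_neg hn0.le, show ((2:ℝ) = ((2:ℕ):ℝ)) by norm_num,
      Real.rpow_natCast]
  -- choose facts
  have hc1 : (m+2).choose 2 ≤ (m+2+d).choose 2 := Nat.choose_le_choose 2 (by omega)
  have hc2 : (m+2+d).choose 2 ≤ K.choose 2 := Nat.choose_le_choose 2 (by omega)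
  set E := (m+2+d).choose 2 - (m+2).choose 2 with hE
  have hE2 : 2 * E = (2*m+3+d) * d := by
    have ha := two_mul_choose_two (m+2+d)
    have hb := two_mul_choose_two (m+2)
    rw [show m+2+d-1 = m+1+d by omega] at ha
    rw [show m+2-1 = m+1 by omega] at hb
    have hr : (m+2+d)*(m+1+d) = (m+2)*(m+1) + (2*m+3+d)*d := by ring
    rw [hE, Nat.mul_sub, ha, hb, hr, Nat.add_sub_cancel_left]
  -- factorial identities
  have hfm : ((m+2).factorial : ℝ) ≠ 0 := by positivity
  have hfd0 : (0:ℝ) < ((d+1).factorial:ℝ) := by positivity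
  have hprod : (∏ i ∈ Finset.range d, ((m+2+1+i : ℕ):ℝ)) = A := by
    rw [hA]
  have hfk : (K.factorial : ℝ) = (K:ℝ) * ((m+2).factorial:ℝ) * A := by
    rw [show K = (m+2+d) + 1 by omega, Nat.factorial_succ,
      show m+2+d = (m+2) + d by omega, fac_prod (m+2) d,
      Nat.cast_mul, Nat.cast_mul, Nat.cast_prod, hprod,
      show ((m+2+d+1 : ℕ):ℝ) = ((m+2+1+d : ℕ):ℝ) from congrArg _ (by omega)]
    ring
  have hchoose : (K.choose (m+2) : ℝ) * ((m+2).factorial:ℝ) * ((d+1).factorial:ℝ)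
      = (K.factorial : ℝ) := by
    have := Nat.choose_mul_factorial_mul_factorial (show m+2 ≤ K by omega)
    rw [show K - (m+2) = d+1 by omega] at this
    exact_mod_cast this
  have hCd : (K.choose (m+2) : ℝ) * ((d+1).factorial:ℝ) = (K:ℝ) * A := by
    have h := hchoose.trans hfk
    have h2 : ((m+2).factorial:ℝ) * ((K.choose (m+2) : ℝ) * ((d+1).factorial:ℝ))
        = ((m+2).factorial:ℝ) * ((K:ℝ) * A) := by linear_combination h
    exact mul_left_cancel₀ hfm h2
  -- key scalar inequality
  have T : (K.choose (m+2) : ℝ) * (n:ℝ)^d * w^E ≤ (K:ℝ) * ((d+1).factorial:ℝ) := by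
    have hnonneg : (0:ℝ) ≤ (K:ℝ) * ((d+1).factorial:ℝ) := by positivity
    apply le_of_pow_le_pow_left₀ two_ne_zero hnonneg
    have hw2E : (w ^ E)^2 = (w ^ (2*m+3+d)) ^ d := by
      rw [← pow_mul, ← pow_mul]
      congr 1
      omega
    have hkey : w ^ (2*m+3+d) ≤ ((n:ℝ)^2)⁻¹ * ((Real.exp 1)⁻¹)^m := by
      have hsp : w ^ (2*m+3+d) = w ^ K * w ^ m := by
        rw [← pow_add]; congr 1; omega
      rw [hsp]
      exact mul_le_mul hwk (pow_le_pow_left₀ hw0.le hwe m) (by positivity) (by positivity)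
    have hstep : ((n:ℝ)^d)^2 * (w^E)^2 ≤ ((Real.exp 1)⁻¹)^(m*d) := by
      rw [hw2E, ← pow_mul, mul_comm d 2, pow_mul, ← mul_pow, pow_mul]
      calc ((n:ℝ)^2 * w ^ (2*m+3+d)) ^ d
          ≤ ((n:ℝ)^2 * (((n:ℝ)^2)⁻¹ * ((Real.exp 1)⁻¹)^m)) ^ d := by
            apply pow_le_pow_left₀ (mul_nonneg (by positivity) (pow_nonneg hw0.le _))
            exact mul_le_mul_of_nonneg_left hkey (by positivity)
        _ = (((Real.exp 1)⁻¹)^m) ^ d := by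
            rw [← mul_assoc, mul_inv_cancel₀ (by positivity), one_mul]
    have hfinal : (K.choose (m+2) : ℝ)^2
        ≤ ((K:ℝ) * ((d+1).factorial:ℝ))^2 * Real.exp 1 ^ (m*d) := by
      have hmul : (K.choose (m+2) : ℝ)^2 * ((d+1).factorial:ℝ)^2
          ≤ (((K:ℝ) * ((d+1).factorial:ℝ))^2 * Real.exp 1 ^ (m*d))
              * ((d+1).factorial:ℝ)^2 := by
        rw [show (K.choose (m+2) : ℝ)^2 * ((d+1).factorial:ℝ)^2
            = ((K.choose (m+2) : ℝ) * ((d+1).factorial:ℝ))^2 by ring, hCd, mul_pow]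
        calc (K:ℝ)^2 * A^2
            ≤ (K:ℝ)^2 * (((d+1).factorial:ℝ)^4 * Real.exp 1 ^ (m*d)) :=
              mul_le_mul_of_nonneg_left (prod_sq_le m d) (by positivity)
          _ = (((K:ℝ) * ((d+1).factorial:ℝ))^2 * Real.exp 1 ^ (m*d))
              * ((d+1).factorial:ℝ)^2 := by ring
      exact le_of_mul_le_mul_right hmul (by positivity)
    calc ((K.choose (m+2) : ℝ) * (n:ℝ)^d * w^E)^2
        = (K.choose (m+2) : ℝ)^2 * (((n:ℝ)^d)^2 * (w^E)^2) := by ring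
      _ ≤ (K.choose (m+2) : ℝ)^2 * ((Real.exp 1)⁻¹)^(m*d) :=
          mul_le_mul_of_nonneg_left hstep (by positivity)
      _ ≤ ((K:ℝ) * ((d+1).factorial:ℝ))^2 := by
          rw [inv_pow, ← div_eq_mul_inv, div_le_iff₀ (by positivity)]
          exact hfinal
  -- now massage back to vSeq
  have hKm1 : K - 1 = m + 2 + d := by omega
  have hsplit : K.choose 2 - (m+2).choose 2 = (K.choose 2 - (m+2+d).choose 2) + E := by
    omega
  have hG : (0:ℝ) < (n:ℝ) * (w ^ K.choose 2 / ((K.choose 2).factorial : ℝ)) *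
      (w ^ (K.choose 2 - (m+2+d).choose 2) / (((m+2+d)).factorial : ℝ)) /
      ((d+1).factorial:ℝ) := by positivity
  simp only [vSeq]
  rw [hKm1]
  have hKK : K.choose (m+2+d) = K := by
    rw [show K = (m+2+d) + 1 by omega]
    exact Nat.choose_succ_self_right _
  rw [show K - (m+2) = d + 1 by omega, show K - (m+2+d) = 1 by omega, hKK,
    hsplit, Nat.factorial_one, Nat.cast_one, pow_one]
  calc (K.choose (m+2) : ℝ) * ((n:ℝ)^(d+1) / ((d+1).factorial:ℝ)) *
        (w ^ K.choose 2 / ((K.choose 2).factorial : ℝ)) *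
        (w ^ ((K.choose 2 - (m+2+d).choose 2) + E) / (((m+2+d)).factorial : ℝ))
      = ((K.choose (m+2) : ℝ) * (n:ℝ)^d * w^E) *
        ((n:ℝ) * (w ^ K.choose 2 / ((K.choose 2).factorial : ℝ)) *
          (w ^ (K.choose 2 - (m+2+d).choose 2) / (((m+2+d)).factorial : ℝ)) /
          ((d+1).factorial:ℝ)) := by
        rw [pow_add, pow_succ]
        ring
    _ ≤ ((K:ℝ) * ((d+1).factorial:ℝ)) *
        ((n:ℝ) * (w ^ K.choose 2 / ((K.choose 2).factorial : ℝ)) *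
          (w ^ (K.choose 2 - (m+2+d).choose 2) / (((m+2+d)).factorial : ℝ)) /
          ((d+1).factorial:ℝ)) := mul_le_mul_of_nonneg_right T hG.le
    _ = (K:ℝ) * ((n:ℝ) / (1:ℝ)) *
        (w ^ K.choose 2 / ((K.choose 2).factorial : ℝ)) *
        (w ^ (K.choose 2 - (m+2+d).choose 2) / (((m+2+d)).factorial : ℝ)) := by
        field_simp
end

section
/- Fix integers n ≥ k ≥ 3 and let 0 < w ≤ min{ n^{−2/k}, exp(−(k−1)/(k−2)) }. Set m = C(k,2), m_ℓ = C(k,2) − C(ℓ,2), u_ℓ = C(k,ℓ)·C(n−k, k−ℓ), and b2 = C(n,k)·Σ_{ℓ=2}^{k−1} u_ℓ·(w^{m+m_ℓ}/(m+m_ℓ)!)·C(2m_ℓ, m_ℓ). Then b2 ≤ ((k−2)/(C(k,2)!·((k−1)!)²))·n^{k+1}·w^{C(k,2)+k−1}. -/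
lemma two_mul_choose_two_s13 (n : ℕ) : 2 * n.choose 2 = n * (n - 1) := by
  induction n with
  | zero => simp
  | succ n ih =>
    rw [Nat.choose_succ_succ, Nat.choose_one_right, Nat.mul_add, ih]
    cases n
    · simp
    · simp; ring

lemma choose_two_step (k : ℕ) (hk : 1 ≤ k) : (k - 1).choose 2 + (k - 1) = k.choose 2 := by
  obtain ⟨k, rfl⟩ := Nat.exists_eq_add_of_le hk
  simp [Nat.choose_succ_succ, Nat.choose_one_right, Nat.add_comm]

lemma ml_ge (k ℓ : ℕ) (hl : ℓ ≤ k - 1) (hk : 1 ≤ k) :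
    ℓ.choose 2 + (k - 1) ≤ k.choose 2 := by
  have h1 : ℓ.choose 2 ≤ (k-1).choose 2 := Nat.choose_le_choose 2 hl
  have h2 := choose_two_step k hk
  omega

-- key factorial lemma
lemma keyK : ∀ d k ℓ : ℕ, 2 ≤ ℓ → ℓ + d + 1 = k →
    ((k-1).factorial)^2 ≤ ℓ.factorial * ((k-ℓ).factorial)^2 *
      ((k.choose 2 - ℓ.choose 2).factorial) := by
  intro d
  induction d with
  | zero =>
    intro k ℓ h2 hkl
    have hℓ : ℓ = k - 1 := by omega
    subst hℓ
    have hk1 : 1 ≤ k := by omega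
    have h := choose_two_step k hk1
    have hm : k.choose 2 - (k-1).choose 2 = k - 1 := by omega
    have hkk : k - (k-1) = 1 := by omega
    rw [hm, hkk]
    simp [pow_two]
  | succ d ih =>
    intro k ℓ h2 hkl
    have hih := ih k (ℓ+1) (by omega) (by omega)
    -- notation
    set M := k.choose 2 with hM
    have hL : (ℓ+1).choose 2 = ℓ.choose 2 + ℓ := by
      have := choose_two_step (ℓ+1) (by omega)
      simpa using this.symm
    have hml : ℓ.choose 2 + (k-1) ≤ M := ml_ge k ℓ (by omega) (by omega)
    have hml' : (ℓ+1).choose 2 + (k-1) ≤ M := ml_ge k (ℓ+1) (by omega) (by omega)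
    -- M - L = (M - L') + ℓ  where L' = L + ℓ
    have e1 : M - ℓ.choose 2 = (M - (ℓ+1).choose 2) + ℓ := by omega
    -- (M-L)! ≥ (M-L) * (M-L')!
    have f1 : (M - (ℓ+1).choose 2).factorial * (M - ℓ.choose 2)
        ≤ (M - ℓ.choose 2).factorial := by
      have h3 : M - ℓ.choose 2 ≥ 1 := by omega
      calc (M - (ℓ+1).choose 2).factorial * (M - ℓ.choose 2)
          ≤ (M - ℓ.choose 2 - 1).factorial * (M - ℓ.choose 2) := by
            apply Nat.mul_le_mul_right
            exact Nat.factorial_le (by omega)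
        _ = (M - ℓ.choose 2).factorial := by
            rw [mul_comm]
            conv_rhs => rw [show M - ℓ.choose 2 = (M - ℓ.choose 2 - 1) + 1 by omega]
            rw [Nat.factorial_succ]
            congr 1
            omega
    -- (k-ℓ)! = (k-ℓ) * (k-ℓ-1)!
    have f2 : (k - ℓ).factorial = (k - ℓ) * (k - (ℓ+1)).factorial := by
      conv_lhs => rw [show k - ℓ = (k - (ℓ+1)) + 1 by omega]
      rw [Nat.factorial_succ]
      congr 1
      omega
    calc ((k-1).factorial)^2
        ≤ (ℓ+1).factorial * ((k-(ℓ+1)).factorial)^2 * ((M - (ℓ+1).choose 2).factorial) := hih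
      _ ≤ ℓ.factorial * ((k-ℓ).factorial)^2 * ((M - ℓ.choose 2).factorial) := by
          rw [Nat.factorial_succ, f2, mul_pow]
          calc (ℓ+1) * ℓ.factorial * (((k - (ℓ+1)).factorial)^2) * ((M - (ℓ+1).choose 2).factorial)
              ≤ ℓ.factorial * ((k-ℓ)^2 * ((k - (ℓ+1)).factorial)^2) * ((M - (ℓ+1).choose 2).factorial * (M - ℓ.choose 2)) := by
                have hkl1 : 1 ≤ k - ℓ := by omega
                have h4 : (ℓ+1) ≤ (k-ℓ)^2 * (M - ℓ.choose 2) := by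
                  have : k - 1 ≤ M - ℓ.choose 2 := by omega
                  calc ℓ+1 ≤ k - 1 := by omega
                    _ ≤ M - ℓ.choose 2 := this
                    _ ≤ (k-ℓ)^2 * (M - ℓ.choose 2) := Nat.le_mul_of_pos_left _ (by positivity)
                have h5 := Nat.mul_le_mul_right
                  (ℓ.factorial * ((k-(ℓ+1)).factorial)^2 * (M-(ℓ+1).choose 2).factorial) h4
                calc (ℓ+1) * ℓ.factorial * (((k - (ℓ+1)).factorial)^2) * ((M - (ℓ+1).choose 2).factorial)
                    = (ℓ+1) * (ℓ.factorial * ((k-(ℓ+1)).factorial)^2 * (M-(ℓ+1).choose 2).factorial) := by ring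
                  _ ≤ ((k-ℓ)^2 * (M - ℓ.choose 2)) * (ℓ.factorial * ((k-(ℓ+1)).factorial)^2 * (M-(ℓ+1).choose 2).factorial) := h5
                  _ = ℓ.factorial * ((k-ℓ)^2 * ((k - (ℓ+1)).factorial)^2) * ((M - (ℓ+1).choose 2).factorial * (M - ℓ.choose 2)) := by ring
            _ ≤ ℓ.factorial * ((k-ℓ)^2 * ((k - (ℓ+1)).factorial)^2) * ((M - ℓ.choose 2).factorial) :=
                Nat.mul_le_mul_left _ f1

lemma key2 (k ℓ : ℕ) (hk : 3 ≤ k) (h2 : 2 ≤ ℓ) (hl : ℓ ≤ k - 1) :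
    k.choose ℓ * ((k-1).factorial)^2 ≤
      k.factorial * (k-ℓ).factorial * ((k.choose 2 - ℓ.choose 2).factorial) := by
  have hK := keyK (k - 1 - ℓ) k ℓ h2 (by omega)
  have hc : k.choose ℓ * ℓ.factorial * (k-ℓ).factorial = k.factorial :=
    Nat.choose_mul_factorial_mul_factorial (by omega)
  have hpos : 0 < ℓ.factorial * (k-ℓ).factorial := by positivity
  apply Nat.le_of_mul_le_mul_right _ hpos
  calc k.choose ℓ * ((k-1).factorial)^2 * (ℓ.factorial * (k-ℓ).factorial)
      = (k.choose ℓ * ℓ.factorial * (k-ℓ).factorial) * ((k-1).factorial)^2 := by ring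
    _ = k.factorial * ((k-1).factorial)^2 := by rw [hc]
    _ ≤ k.factorial * (ℓ.factorial * ((k-ℓ).factorial)^2 * ((k.choose 2 - ℓ.choose 2).factorial)) :=
        Nat.mul_le_mul_left _ hK
    _ = k.factorial * (k-ℓ).factorial * ((k.choose 2 - ℓ.choose 2).factorial) * (ℓ.factorial * (k-ℓ).factorial) := by ring

lemma natMain (n k ℓ : ℕ) (hk : 3 ≤ k) (hkn : k ≤ n) (h2 : 2 ≤ ℓ) (hl : ℓ ≤ k - 1) :
    n.choose k * k.choose ℓ * ((n-k).choose (k-ℓ)) *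
      ((2*(k.choose 2 - ℓ.choose 2)).choose (k.choose 2 - ℓ.choose 2)) *
      (k.choose 2).factorial * ((k-1).factorial)^2
    ≤ n^(k+1+(k-1-ℓ)) * ((k.choose 2 + (k.choose 2 - ℓ.choose 2)).factorial) := by
  set m := k.choose 2 with hm
  set r := m - ℓ.choose 2 with hr
  have hrm : r ≤ m := Nat.sub_le _ _
  have A1 : n.choose k * k.factorial ≤ n^k := by
    have := Nat.descFactorial_le_pow n k
    rw [Nat.descFactorial_eq_factorial_mul_choose] at this
    rw [mul_comm]; exact this
  have A2 : (n-k).choose (k-ℓ) * (k-ℓ).factorial ≤ n^(k-ℓ) := by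
    have h := Nat.descFactorial_le_pow (n-k) (k-ℓ)
    rw [Nat.descFactorial_eq_factorial_mul_choose] at h
    calc (n-k).choose (k-ℓ) * (k-ℓ).factorial ≤ (n-k)^(k-ℓ) := by
          rw [mul_comm]; exact h
      _ ≤ n^(k-ℓ) := Nat.pow_le_pow_left (Nat.sub_le _ _) _
  have A3 : (2*r).choose r * (r.factorial * m.factorial) ≤ (m+r).factorial := by
    have h1 : (2*r).choose r ≤ (m+r).choose r := Nat.choose_le_choose r (by omega)
    have h2 : (m+r).choose r * r.factorial * (m+r-r).factorial = (m+r).factorial :=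
      Nat.choose_mul_factorial_mul_factorial (by omega)
    have h3 : m + r - r = m := by omega
    rw [h3] at h2
    calc (2*r).choose r * (r.factorial * m.factorial)
        ≤ (m+r).choose r * (r.factorial * m.factorial) :=
          Nat.mul_le_mul_right _ h1
      _ = (m+r).factorial := by rw [← h2]; ring
  have A4 : k.choose ℓ * ((k-1).factorial)^2 ≤ k.factorial * (k-ℓ).factorial * r.factorial :=
    key2 k ℓ hk h2 hl
  have hpos : 0 < k.factorial * (k-ℓ).factorial * r.factorial := by positivity
  apply Nat.le_of_mul_le_mul_right _ hpos
  have hexp : n^(k+1+(k-1-ℓ)) = n^k * n^(k-ℓ) := by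
    rw [← pow_add]; congr 1; omega
  calc n.choose k * k.choose ℓ * ((n-k).choose (k-ℓ)) * ((2*r).choose r) * m.factorial * ((k-1).factorial)^2
        * (k.factorial * (k-ℓ).factorial * r.factorial)
      = (n.choose k * k.factorial) * ((n-k).choose (k-ℓ) * (k-ℓ).factorial) *
        ((2*r).choose r * (r.factorial * m.factorial)) * (k.choose ℓ * ((k-1).factorial)^2) := by ring
    _ ≤ (n^k) * (n^(k-ℓ)) * ((m+r).factorial) * (k.factorial * (k-ℓ).factorial * r.factorial) := by
        exact Nat.mul_le_mul (Nat.mul_le_mul (Nat.mul_le_mul A1 A2) A3) A4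
    _ = n^(k+1+(k-1-ℓ)) * ((m+r).factorial) * (k.factorial * (k-ℓ).factorial * r.factorial) := by
        rw [hexp]

lemma expIneq (k ℓ : ℕ) (hk : 3 ≤ k) (h2 : 2 ≤ ℓ) (hl : ℓ ≤ k - 1) :
    k * (k - 1 - ℓ) ≤ 2 * ((k.choose 2 - ℓ.choose 2) - (k - 1)) := by
  have hm := two_mul_choose_two_s13 k
  have hL := two_mul_choose_two_s13 ℓ
  have hml : ℓ.choose 2 + (k-1) ≤ k.choose 2 := ml_ge k ℓ hl (by omega)
  have hAA : k - 1 ≤ k.choose 2 - ℓ.choose 2 := by omega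
  have hBB : ℓ.choose 2 ≤ k.choose 2 := by omega
  have h1k : (1:ℕ) ≤ k := by omega
  have h1l : (1:ℕ) ≤ ℓ := by omega
  zify [hl, h1k, h1l, hAA, hBB] at hm hL hml ⊢
  nlinarith [mul_nonneg (by omega : (0:ℤ) ≤ (ℓ:ℤ) - 2) (by omega : (0:ℤ) ≤ (k:ℤ) - 1 - ℓ)]

lemma realTerm (n k ℓ : ℕ) (hk : 3 ≤ k) (hkn : k ≤ n) (h2 : 2 ≤ ℓ) (hl : ℓ ≤ k - 1)
    (w : ℝ) (hw0 : 0 < w) (hw : w ≤ (n:ℝ) ^ (-(2 / (k:ℝ)))) :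
    (n.choose k : ℝ) * ((k.choose ℓ : ℝ) * ((n - k).choose (k - ℓ) : ℝ) *
      (w ^ (k.choose 2 + (k.choose 2 - ℓ.choose 2)) /
        (((k.choose 2 + (k.choose 2 - ℓ.choose 2)).factorial : ℝ))) *
      ((2 * (k.choose 2 - ℓ.choose 2)).choose (k.choose 2 - ℓ.choose 2) : ℝ))
    ≤ (n:ℝ)^(k+1) * w ^ (k.choose 2 + k - 1) /
        (((k.choose 2).factorial : ℝ) * (((k-1).factorial : ℝ))^2) := by
  set m := k.choose 2 with hm
  set r := m - ℓ.choose 2 with hr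
  have hml : ℓ.choose 2 + (k-1) ≤ m := ml_ge k ℓ hl (by omega)
  have hrk : k - 1 ≤ r := by omega
  set d := r - (k-1) with hd
  set c := k - 1 - ℓ with hc
  have hn3 : 3 ≤ n := le_trans hk hkn
  have hn1 : (1:ℝ) ≤ (n:ℝ) := by exact_mod_cast (by omega : 1 ≤ n)
  have hn0 : (0:ℝ) < (n:ℝ) := by linarith
  -- exponent split
  have hE : m + r = (m + k - 1) + d := by omega
  -- w^d ≤ (n^c)⁻¹
  have hwd : w ^ d ≤ ((n:ℝ)^c)⁻¹ := by
    have h1 : w ^ d ≤ ((n:ℝ) ^ (-(2 / (k:ℝ)))) ^ d := pow_le_pow_left₀ hw0.le hw d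
    have h2' : ((n:ℝ) ^ (-(2 / (k:ℝ)))) ^ d = (n:ℝ) ^ ((-(2 / (k:ℝ))) * d) := by
      rw [← Real.rpow_natCast ((n:ℝ) ^ (-(2 / (k:ℝ)))) d, ← Real.rpow_mul hn0.le]
    have h3 : (-(2 / (k:ℝ))) * d ≤ -(c:ℝ) := by
      have hkc : (k:ℝ) * c ≤ 2 * d := by exact_mod_cast expIneq k ℓ hk h2 hl
      have hk0 : (0:ℝ) < (k:ℝ) := by exact_mod_cast (by omega : 0 < k)
      rw [neg_mul, neg_le_neg_iff, div_mul_eq_mul_div, le_div_iff₀ hk0]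
      linarith
    have h4 : (n:ℝ) ^ (-(c:ℝ)) = ((n:ℝ)^c)⁻¹ := by
      rw [Real.rpow_neg hn0.le, Real.rpow_natCast]
    calc w ^ d ≤ ((n:ℝ) ^ (-(2 / (k:ℝ)))) ^ d := h1
      _ = (n:ℝ) ^ ((-(2 / (k:ℝ))) * d) := h2'
      _ ≤ (n:ℝ) ^ (-(c:ℝ)) := Real.rpow_le_rpow_of_exponent_le hn1 h3
      _ = ((n:ℝ)^c)⁻¹ := h4
  set B : ℝ := (n.choose k : ℝ) * (k.choose ℓ : ℝ) * ((n - k).choose (k - ℓ) : ℝ) *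
      ((2 * r).choose r : ℝ) with hB
  have hB0 : 0 ≤ B := by positivity
  have hnm : B * (((m).factorial : ℝ) * (((k-1).factorial : ℝ))^2)
      ≤ (n:ℝ)^(k+1) * ((n:ℝ)^c * ((m + r).factorial : ℝ)) := by
    have h := natMain n k ℓ hk hkn h2 hl
    have hcast : ((n.choose k * k.choose ℓ * ((n-k).choose (k-ℓ)) *
        ((2*r).choose r) * m.factorial * ((k-1).factorial)^2 : ℕ) : ℝ)
        ≤ ((n^(k+1+c) * ((m + r).factorial) : ℕ) : ℝ) := by exact_mod_cast h
    push_cast at hcast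
    calc B * (((m).factorial : ℝ) * (((k-1).factorial : ℝ))^2)
        = ((n.choose k : ℝ) * (k.choose ℓ) * ((n-k).choose (k-ℓ)) *
          ((2*r).choose r) * (m.factorial : ℝ) * (((k-1).factorial : ℝ))^2) := by rw [hB]; ring
      _ ≤ (n:ℝ)^(k+1+c) * ((m + r).factorial : ℝ) := hcast
      _ = (n:ℝ)^(k+1) * ((n:ℝ)^c * ((m + r).factorial : ℝ)) := by rw [pow_add]; ring
  have hEf : (0:ℝ) < ((m+r).factorial : ℝ) := by positivity
  have hD : (0:ℝ) < ((m).factorial : ℝ) * (((k-1).factorial : ℝ))^2 := by positivity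
  have hkey : B * ((n:ℝ)^c)⁻¹ / ((m+r).factorial : ℝ)
      ≤ (n:ℝ)^(k+1) / (((m).factorial : ℝ) * (((k-1).factorial : ℝ))^2) := by
    rw [div_le_div_iff₀ (by positivity) hD]
    calc B * ((n:ℝ)^c)⁻¹ * (((m).factorial:ℝ) * (((k-1).factorial:ℝ))^2)
        = B * (((m).factorial:ℝ) * (((k-1).factorial:ℝ))^2) * ((n:ℝ)^c)⁻¹ := by ring
      _ ≤ (n:ℝ)^(k+1) * ((n:ℝ)^c * ((m + r).factorial : ℝ)) * ((n:ℝ)^c)⁻¹ := by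
          apply mul_le_mul_of_nonneg_right hnm (by positivity)
      _ = (n:ℝ)^(k+1) * ((m + r).factorial : ℝ) := by
          field_simp
  have hew : k.choose 2 + k - 1 = m + k - 1 := rfl
  have hwF : (0:ℝ) < w ^ (m + k - 1) := pow_pos hw0 _
  calc (n.choose k : ℝ) * ((k.choose ℓ : ℝ) * ((n - k).choose (k - ℓ) : ℝ) *
        (w ^ (m + r) / (((m + r).factorial : ℝ))) * ((2 * r).choose r : ℝ))
      = B * w ^ (m + r) / ((m + r).factorial : ℝ) := by rw [hB]; ring
    _ = w ^ (m + k - 1) * (B * w ^ d / ((m + r).factorial : ℝ)) := by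
        rw [hE, pow_add]; ring
    _ ≤ w ^ (m + k - 1) * (B * ((n:ℝ)^c)⁻¹ / ((m + r).factorial : ℝ)) := by
        apply mul_le_mul_of_nonneg_left _ hwF.le
        exact div_le_div_of_nonneg_right (mul_le_mul_of_nonneg_left hwd hB0) hEf.le
    _ ≤ w ^ (m + k - 1) * ((n:ℝ)^(k+1) / (((m).factorial : ℝ) * (((k-1).factorial : ℝ))^2)) :=
        mul_le_mul_of_nonneg_left hkey hwF.le
    _ = (n:ℝ)^(k+1) * w ^ (m + k - 1) / (((m).factorial : ℝ) * (((k-1).factorial : ℝ))^2) := by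
        ring

theorem statement13 (n k : ℕ) (hk : 3 ≤ k) (hkn : k ≤ n)
    (w : ℝ) (hw0 : 0 < w)
    (hw1 : w ≤ min ((n : ℝ) ^ (-(2 / (k : ℝ))))
        (Real.exp (-((k : ℝ) - 1) / ((k : ℝ) - 2)))) :
    (n.choose k : ℝ) * (∑ ℓ ∈ Finset.Icc 2 (k - 1),
        (k.choose ℓ : ℝ) * ((n - k).choose (k - ℓ) : ℝ) *
          (w ^ (k.choose 2 + (k.choose 2 - ℓ.choose 2)) /
            ((k.choose 2 + (k.choose 2 - ℓ.choose 2)).factorial : ℝ)) *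
          ((2 * (k.choose 2 - ℓ.choose 2)).choose (k.choose 2 - ℓ.choose 2) : ℝ))
      ≤ (((k : ℝ) - 2) / (((k.choose 2).factorial : ℝ) * (((k - 1).factorial : ℝ)) ^ 2)) *
          (n : ℝ) ^ (k + 1) * w ^ (k.choose 2 + k - 1) := by
  have hw : w ≤ (n : ℝ) ^ (-(2 / (k : ℝ))) := le_trans hw1 (min_le_left _ _)
  set A : ℝ := (n:ℝ)^(k+1) * w ^ (k.choose 2 + k - 1) /
      (((k.choose 2).factorial : ℝ) * (((k-1).factorial : ℝ))^2) with hA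
  rw [Finset.mul_sum]
  have hsum : ∑ ℓ ∈ Finset.Icc 2 (k - 1), (n.choose k : ℝ) *
      ((k.choose ℓ : ℝ) * ((n - k).choose (k - ℓ) : ℝ) *
        (w ^ (k.choose 2 + (k.choose 2 - ℓ.choose 2)) /
          ((k.choose 2 + (k.choose 2 - ℓ.choose 2)).factorial : ℝ)) *
        ((2 * (k.choose 2 - ℓ.choose 2)).choose (k.choose 2 - ℓ.choose 2) : ℝ))
      ≤ (Finset.Icc 2 (k-1)).card • A := by
    apply Finset.sum_le_card_nsmul
    intro ℓ hℓ
    rw [Finset.mem_Icc] at hℓ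
    exact realTerm n k ℓ hk hkn hℓ.1 hℓ.2 w hw0 hw
  refine le_trans hsum ?_
  have hcard : (Finset.Icc 2 (k-1)).card = k - 2 := by
    rw [Nat.card_Icc]; omega
  rw [hcard, nsmul_eq_mul, hA]
  have hc2 : ((k - 2 : ℕ) : ℝ) = (k:ℝ) - 2 := by
    have : (2:ℕ) ≤ k := by omega
    push_cast [this]; ring
  rw [hc2]
  exact le_of_eq (by ring)
end

section
/- Fix integers n ≥ k ≥ 3 with n ≥ 9/k (so that kn ≥ 9), and let 0 < w ≤ min{ n^{−2/k}, exp(−(k−1)/(k−2)) }. Set m = C(k,2), p = w^m/m!, m_ℓ = C(k,2) − C(ℓ,2), u_ℓ = C(k,ℓ)·C(n−k, k−ℓ), v_ℓ = C(k,ℓ)·(n^{k−ℓ}/(k−ℓ)!)·p·(w^{m_ℓ}/(k−1)!), b1 = C(n,k)·Σ_{ℓ=2}^{k} u_ℓ·p², and b2' = C(n,k)·Σ_{ℓ=2}^{k−1} v_ℓ. Then b1 ≤ (1 + 1/9)·(1/(3e))·b2' < b2'/7. -/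
set_option maxHeartbeats 1000000


theorem statement14 (n k : ℕ) (hk : 3 ≤ k) (hkn : k ≤ n) (hkn9 : 9 ≤ k * n)
    (w : ℝ) (hw0 : 0 < w)
    (hw1 : w ≤ min ((n : ℝ) ^ (-(2 / (k : ℝ))))
        (Real.exp (-((k : ℝ) - 1) / ((k : ℝ) - 2)))) :
    (n.choose k : ℝ) * (∑ ℓ ∈ Finset.Icc 2 k,
          (k.choose ℓ : ℝ) * ((n - k).choose (k - ℓ) : ℝ) *
            (w ^ k.choose 2 / ((k.choose 2).factorial : ℝ)) ^ 2)
        ≤ (1 + 1 / 9) * (1 / (3 * Real.exp 1)) *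
            ((n.choose k : ℝ) * ∑ ℓ ∈ Finset.Icc 2 (k - 1), vSeq k n w ℓ) ∧
      (1 + 1 / 9) * (1 / (3 * Real.exp 1)) *
            ((n.choose k : ℝ) * ∑ ℓ ∈ Finset.Icc 2 (k - 1), vSeq k n w ℓ)
        < ((n.choose k : ℝ) * ∑ ℓ ∈ Finset.Icc 2 (k - 1), vSeq k n w ℓ) / 7 := by
  set E := Real.exp 1 with hE
  have hE0 : (0:ℝ) < E := Real.exp_pos 1
  have hE1 : (2.7182818283:ℝ) < E := Real.exp_one_gt_d9
  have hkR : (3:ℝ) ≤ (k:ℝ) := by exact_mod_cast hk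
  -- w ≤ exp(-1) = E⁻¹
  have hwe : w ≤ E⁻¹ := by
    have h1 : w ≤ Real.exp (-((k:ℝ)-1)/((k:ℝ)-2)) := hw1.trans (min_le_right _ _)
    have h2 : Real.exp (-((k:ℝ)-1)/((k:ℝ)-2)) ≤ Real.exp (-1) := by
      apply Real.exp_le_exp.mpr
      rw [div_le_iff₀ (by linarith : (0:ℝ) < (k:ℝ)-2)]
      linarith
    have := h1.trans h2
    rwa [Real.exp_neg] at this
  have hw1' : w ≤ 1 := hwe.trans (by
    rw [inv_le_one_iff₀]; right; nlinarith)
  have hwE : w * E ≤ 1 := by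
    have := mul_le_mul_of_nonneg_right hwe hE0.le
    rwa [inv_mul_cancel₀ hE0.ne'] at this
  -- factorial facts
  have hck : k ≤ k.choose 2 := by
    rw [Nat.choose_two_right, Nat.le_div_iff_mul_le (by norm_num)]
    exact Nat.mul_le_mul_left k (by omega)
  have hF1nat : 3 * (k-1).factorial ≤ (k.choose 2).factorial :=
    calc 3 * (k-1).factorial ≤ k * (k-1).factorial :=
          Nat.mul_le_mul_right _ hk
      _ = k.factorial := Nat.mul_factorial_pred (by omega)
      _ ≤ (k.choose 2).factorial := Nat.factorial_le hck
  have hF1R : 3 * ((k-1).factorial : ℝ) ≤ ((k.choose 2).factorial : ℝ) := by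
    exact_mod_cast hF1nat
  have hF1pos : (0:ℝ) < ((k.choose 2).factorial : ℝ) := by
    exact_mod_cast (k.choose 2).factorial_pos
  have hF2pos : (0:ℝ) < ((k-1).factorial : ℝ) := by
    exact_mod_cast (k-1).factorial_pos
  have hn0 : (0:ℝ) < (n:ℝ) := by
    have : 0 < n := by omega
    exact_mod_cast this
  set p : ℝ := w ^ k.choose 2 / ((k.choose 2).factorial : ℝ) with hp
  have hp0 : 0 < p := div_pos (pow_pos hw0 _) hF1pos
  -- key bound for a power of w
  have hWcE : ∀ c : ℕ, 1 ≤ c → w ^ c * E ≤ 1 := by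
    intro c hc
    have h1 : w ^ c ≤ w := pow_le_of_le_one hw0.le hw1' (by omega)
    calc w ^ c * E ≤ w * E := by nlinarith
      _ ≤ 1 := hwE
  -- step bound
  have hstep : ∀ c : ℕ, 1 ≤ c → c ≤ k.choose 2 →
      p ≤ 1/(3*E) * (w ^ (k.choose 2 - c) / ((k-1).factorial : ℝ)) := by
    intro c hc1 hc2
    have hsplit : w ^ k.choose 2 = w ^ (k.choose 2 - c) * w ^ c := by
      rw [← pow_add]; congr 1; omega
    rw [hp, hsplit]
    have hWl : (0:ℝ) < w ^ (k.choose 2 - c) := pow_pos hw0 _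
    have hgoal : w ^ (k.choose 2 - c) * w ^ c * (3 * E * ((k-1).factorial : ℝ))
        ≤ w ^ (k.choose 2 - c) * ((k.choose 2).factorial : ℝ) := by
      have h1 : w ^ (k.choose 2 - c) * w ^ c * (3 * E * ((k-1).factorial : ℝ))
          ≤ w ^ (k.choose 2 - c) * (3 * ((k-1).factorial : ℝ)) := by
        have h0 := hWcE c hc1
        nlinarith [mul_le_mul_of_nonneg_left h0
          (by positivity : (0:ℝ) ≤ w ^ (k.choose 2 - c) * (3 * ((k-1).factorial : ℝ)))]
      nlinarith
    rw [div_le_iff₀ hF1pos]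
    calc w ^ (k.choose 2 - c) * w ^ c
        = (w ^ (k.choose 2 - c) * w ^ c * (3 * E * ((k-1).factorial : ℝ)))
            * (1/(3*E) * (1 / ((k-1).factorial : ℝ))) := by
          field_simp
      _ ≤ (w ^ (k.choose 2 - c) * ((k.choose 2).factorial : ℝ))
            * (1/(3*E) * (1 / ((k-1).factorial : ℝ))) := by
          apply mul_le_mul_of_nonneg_right hgoal; positivity
      _ = 1/(3*E) * (w ^ (k.choose 2 - c) / ((k-1).factorial : ℝ))
            * ((k.choose 2).factorial : ℝ) := by ring
  -- positivity of each vSeq term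
  have hvpos : ∀ ℓ ∈ Finset.Icc 2 (k-1), 0 < vSeq k n w ℓ := by
    intro ℓ hℓ
    rw [Finset.mem_Icc] at hℓ
    have hkl : (0:ℝ) < (k.choose ℓ : ℝ) := by
      exact_mod_cast Nat.choose_pos (by omega : ℓ ≤ k)
    unfold vSeq
    have h2 : (0:ℝ) < ((k-ℓ).factorial : ℝ) := by exact_mod_cast (k-ℓ).factorial_pos
    positivity
  -- termwise bound on Icc 2 (k-1)
  have keyA : ∀ ℓ ∈ Finset.Icc 2 (k-1),
      (k.choose ℓ : ℝ) * ((n - k).choose (k - ℓ) : ℝ) * p ^ 2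
        ≤ 1/(3*E) * vSeq k n w ℓ := by
    intro ℓ hℓ
    rw [Finset.mem_Icc] at hℓ
    have hc1 : 1 ≤ ℓ.choose 2 := Nat.choose_le_choose 2 hℓ.1
    have hc2 : ℓ.choose 2 ≤ k.choose 2 := Nat.choose_le_choose 2 (by omega)
    have h1 : ((n - k).choose (k - ℓ) : ℝ)
        ≤ (n:ℝ) ^ (k - ℓ) / ((k - ℓ).factorial : ℝ) := by
      calc ((n - k).choose (k - ℓ) : ℝ)
          ≤ ((n - k : ℕ):ℝ) ^ (k - ℓ) / ((k - ℓ).factorial : ℝ) := by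
            exact_mod_cast Nat.choose_le_pow_div (k - ℓ) (n - k)
        _ ≤ (n:ℝ) ^ (k - ℓ) / ((k - ℓ).factorial : ℝ) := by
            gcongr
            exact_mod_cast Nat.sub_le n k
    have h2 := hstep (ℓ.choose 2) hc1 hc2
    have hA : (0:ℝ) ≤ (k.choose ℓ : ℝ) := by positivity
    unfold vSeq
    calc (k.choose ℓ : ℝ) * ((n - k).choose (k - ℓ) : ℝ) * p ^ 2
        ≤ (k.choose ℓ : ℝ) * ((n:ℝ) ^ (k - ℓ) / ((k - ℓ).factorial : ℝ)) * p ^ 2 := by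
          have hp2 : (0:ℝ) ≤ p ^ 2 := sq_nonneg p
          have := mul_le_mul_of_nonneg_left h1 hA
          nlinarith
      _ = (k.choose ℓ : ℝ) * ((n:ℝ) ^ (k - ℓ) / ((k - ℓ).factorial : ℝ)) * p * p := by
          ring
      _ ≤ (k.choose ℓ : ℝ) * ((n:ℝ) ^ (k - ℓ) / ((k - ℓ).factorial : ℝ)) * p *
            (1/(3*E) * (w ^ (k.choose 2 - ℓ.choose 2) / ((k-1).factorial : ℝ))) := by
          apply mul_le_mul_of_nonneg_left h2
          positivity
      _ = 1/(3*E) * ((k.choose ℓ : ℝ) * ((n:ℝ) ^ (k - ℓ) / ((k - ℓ).factorial : ℝ)) *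
            (w ^ k.choose 2 / ((k.choose 2).factorial : ℝ)) *
            (w ^ (k.choose 2 - ℓ.choose 2) / ((k-1).factorial : ℝ))) := by
          rw [hp]; ring
  -- ℓ = k term
  have hkn9R : (9:ℝ) ≤ (k:ℝ) * (n:ℝ) := by exact_mod_cast hkn9
  have keyB : p ^ 2 ≤ 1/9 * (1/(3*E)) * vSeq k n w (k-1) := by
    have hck2 : k.choose 2 - (k-1).choose 2 = k - 1 := by
      obtain ⟨j, rfl⟩ : ∃ j, k = j + 1 := ⟨k - 1, by omega⟩
      simp [Nat.choose_succ_succ, Nat.choose_one_right]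
    have hd1 : 1 ≤ (k-1).choose 2 := Nat.choose_le_choose 2 (by omega : 2 ≤ k - 1)
    have hd2 : (k-1).choose 2 ≤ k.choose 2 := Nat.choose_le_choose 2 (by omega)
    have h2 := hstep ((k-1).choose 2) hd1 hd2
    rw [hck2] at h2
    have hchoose : (k.choose (k-1) : ℝ) = (k : ℝ) := by
      have : k.choose (k-1) = k := by
        have h : k.choose (k - 1) = k.choose 1 := Nat.choose_symm (by omega : 1 ≤ k)
        rw [h, Nat.choose_one_right]
      exact_mod_cast this
    have hkk1 : k - (k - 1) = 1 := by omega
    have hv : vSeq k n w (k-1)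
        = (k:ℝ) * (n:ℝ) * p * (w ^ (k-1) / ((k-1).factorial : ℝ)) := by
      unfold vSeq
      rw [hck2, hkk1, hchoose, hp]
      norm_num [Nat.factorial_one]
    rw [hv]
    have hbase : (0:ℝ) ≤ 1/(3*E) * (w ^ (k-1) / ((k-1).factorial : ℝ)) * p := by
      positivity
    calc p ^ 2 = p * p := pow_two p
      _ ≤ (1/(3*E) * (w ^ (k-1) / ((k-1).factorial : ℝ))) * p :=
          mul_le_mul_of_nonneg_right h2 hp0.le
      _ ≤ 1/9 * (1/(3*E)) * ((k:ℝ) * (n:ℝ) * p * (w ^ (k-1) / ((k-1).factorial : ℝ))) := by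
          nlinarith [mul_le_mul_of_nonneg_left hkn9R hbase]
  -- assemble
  have hmem : k - 1 ∈ Finset.Icc 2 (k-1) := by
    rw [Finset.mem_Icc]; omega
  set T : ℝ := ∑ ℓ ∈ Finset.Icc 2 (k-1), vSeq k n w ℓ with hT
  have hTpos : 0 < T := Finset.sum_pos hvpos ⟨k-1, hmem⟩
  have hTk : vSeq k n w (k-1) ≤ T :=
    Finset.single_le_sum (fun ℓ h => (hvpos ℓ h).le) hmem
  have hCnk : (0:ℝ) < (n.choose k : ℝ) := by
    exact_mod_cast Nat.choose_pos hkn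
  have hsplitIcc : Finset.Icc 2 k = insert k (Finset.Icc 2 (k-1)) := by
    ext x
    simp only [Finset.mem_Icc, Finset.mem_insert]
    omega
  constructor
  · rw [hsplitIcc, Finset.sum_insert (by rw [Finset.mem_Icc]; omega)]
    have hfk : (k.choose k : ℝ) * ((n - k).choose (k - k) : ℝ) * p ^ 2 = p ^ 2 := by
      simp [Nat.choose_self, Nat.sub_self]
    rw [hfk]
    have hS : ∑ ℓ ∈ Finset.Icc 2 (k-1),
        (k.choose ℓ : ℝ) * ((n - k).choose (k - ℓ) : ℝ) * p ^ 2
          ≤ 1/(3*E) * T := by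
      rw [hT, Finset.mul_sum]
      exact Finset.sum_le_sum keyA
    have hfk2 : p ^ 2 ≤ 1/9 * (1/(3*E)) * T := by
      calc p ^ 2 ≤ 1/9 * (1/(3*E)) * vSeq k n w (k-1) := keyB
        _ ≤ 1/9 * (1/(3*E)) * T := by
            apply mul_le_mul_of_nonneg_left hTk
            positivity
    calc (n.choose k : ℝ) * (p ^ 2 + ∑ ℓ ∈ Finset.Icc 2 (k-1),
            (k.choose ℓ : ℝ) * ((n - k).choose (k - ℓ) : ℝ) * p ^ 2)
        ≤ (n.choose k : ℝ) * (1/9 * (1/(3*E)) * T + 1/(3*E) * T) := by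
          apply mul_le_mul_of_nonneg_left _ hCnk.le
          linarith
      _ = (1 + 1/9) * (1/(3*E)) * ((n.choose k : ℝ) * T) := by ring
  · have h70 : (70:ℝ) < 27 * E := by nlinarith
    have hB : (0:ℝ) < (n.choose k : ℝ) * T := mul_pos hCnk hTpos
    have hc : (1 + 1/9) * (1/(3*E)) < 1/7 := by
      rw [show (1 + 1/9 : ℝ) * (1/(3*E)) = 10/(27*E) by ring,
        div_lt_div_iff₀ (by positivity) (by norm_num : (0:ℝ) < 7)]
      linarith
    calc (1 + 1/9) * (1/(3*E)) * ((n.choose k : ℝ) * T)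
        < 1/7 * ((n.choose k : ℝ) * T) := mul_lt_mul_of_pos_right hc hB
      _ = ((n.choose k : ℝ) * T) / 7 := by ring
end

section
/- Let H be a strictly balanced graph and let F = (V_1 ∪ V_2, E_1 ∪ E_2) be the union of two distinct copies (V_1,E_1) and (V_2,E_2) of H (each isomorphic to H, not equal as labeled graphs) that share at least one edge, i.e., E_1 ∩ E_2 ≠ ∅. Then den(F) > den(H), where den(G) = e(G)/v(G). -/
/-- `H` is strictly balanced: every proper subgraph with at least one edge has
strictly smaller density. -/
def IsStrictlyBalanced {v : ℕ} (H : SimpleGraph (Fin v)) : Prop :=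
  ∀ H' : H.Subgraph, H' ≠ ⊤ → H'.edgeSet.Nonempty →
    (H'.edgeSet.ncard : ℝ) / (H'.verts.ncard : ℝ) < (H.edgeSet.ncard : ℝ) / v

/-- The edge set of the copy of `H` given by the injection `f`. -/
def copyEdges {v N : ℕ} (H : SimpleGraph (Fin v)) [DecidableRel H.Adj]
    (f : Fin v ↪ Fin N) : Finset (Sym2 (Fin N)) :=
  H.edgeFinset.image (Sym2.map ⇑f)

/-!
Pull the common part of the two copies back to `H` along the first embedding. This gives a
subgraph `H'` of `H` with `e(H') = |E₁ ∩ E₂|` and `v(H') = |V₁ ∩ V₂|`; it has an edge because the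
copies share one, and it is proper because the copies are distinct. Strict balance gives
`den(H') < den(H)`, and by inclusion–exclusion `F` is `H` doubled minus `H'`, so removing the
sparser `H'` from two copies of `H` pushes the density above `den(H)`.
-/

open Finset

theorem div_lt_two_mul_sub_div_two_mul_sub {K : Type*} [Field K] [LinearOrder K]
    [IsStrictOrderedRing K] {a b c d : K} (hd : 0 < d) (hdb : d ≤ b) (h : c / d < a / b) :
    a / b < (2 * a - c) / (2 * b - d) := by
  have hb : 0 < b := hd.trans_le hdb
  rw [div_lt_div_iff₀ hd hb] at h
  rw [div_lt_div_iff₀ hb (by linarith)]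
  linarith

theorem cast_card_union_of_card_eq {α : Type*} [DecidableEq α] {s t : Finset α} {k : ℕ}
    (hs : #s = k) (ht : #t = k) : (#(s ∪ t) : ℝ) = 2 * k - #(s ∩ t) := by
  have := card_union_add_card_inter s t
  rw [hs, ht, ← two_mul] at this
  rw [eq_sub_iff_add_eq]
  exact_mod_cast this

theorem div_lt_card_union_div_card_union {α β : Type*} [DecidableEq α] [DecidableEq β]
    {E₁ E₂ : Finset α} {V₁ V₂ : Finset β} {e n : ℕ} (hE₁ : #E₁ = e) (hE₂ : #E₂ = e)
    (hV₁ : #V₁ = n) (hV₂ : #V₂ = n) (hV : 0 < #(V₁ ∩ V₂))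
    (h : (#(E₁ ∩ E₂) : ℝ) / #(V₁ ∩ V₂) < e / n) :
    (e : ℝ) / n < #(E₁ ∪ E₂) / #(V₁ ∪ V₂) := by
  have hle : #(V₁ ∩ V₂) ≤ n := hV₁ ▸ card_le_card inter_subset_left
  rw [cast_card_union_of_card_eq hE₁ hE₂, cast_card_union_of_card_eq hV₁ hV₂]
  exact div_lt_two_mul_sub_div_two_mul_sub (by exact_mod_cast hV) (by exact_mod_cast hle) h

namespace SimpleGraph

variable {V W : Type*} {H : SimpleGraph V}

def copyOverlap (H : SimpleGraph V) (f g : V → W) : H.Subgraph where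
  verts := f ⁻¹' Set.range g
  Adj x y := H.Adj x y ∧ s(f x, f y) ∈ Sym2.map g '' H.edgeSet
  adj_sub h := h.1
  edge_vert := by
    rintro x y ⟨-, s, -, hs⟩
    obtain ⟨a, -, ha⟩ := Sym2.mem_map.mp (hs ▸ Sym2.mem_mk_left (f x) (f y))
    exact ⟨a, ha⟩
  symm := ⟨fun x y h => ⟨h.1.symm, by rw [Sym2.eq_swap]; exact h.2⟩⟩

theorem image_verts_copyOverlap (f g : V → W) :
    f '' (H.copyOverlap f g).verts = Set.range f ∩ Set.range g :=
  Set.image_preimage_eq_range_inter (t := Set.range g)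

theorem image_edgeSet_copyOverlap (f g : V → W) :
    Sym2.map f '' (H.copyOverlap f g).edgeSet
      = Sym2.map f '' H.edgeSet ∩ Sym2.map g '' H.edgeSet := by
  ext t
  constructor
  · rintro ⟨s, hs, rfl⟩
    induction s using Sym2.ind with
    | _ x y =>
      rw [Subgraph.mem_edgeSet] at hs
      exact ⟨⟨s(x, y), hs.1, rfl⟩, hs.2⟩
  · rintro ⟨⟨s, hs, rfl⟩, hg⟩
    induction s using Sym2.ind with
    | _ x y => exact ⟨s(x, y), Subgraph.mem_edgeSet.mpr ⟨hs, hg⟩, rfl⟩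

theorem subset_of_copyOverlap_eq_top {f g : V → W} (h : H.copyOverlap f g = ⊤) :
    Set.range f ⊆ Set.range g ∧ Sym2.map f '' H.edgeSet ⊆ Sym2.map g '' H.edgeSet := by
  have hV := image_verts_copyOverlap (H := H) f g
  have hE := image_edgeSet_copyOverlap (H := H) f g
  rw [h, Subgraph.verts_top, Set.image_univ] at hV
  rw [h, Subgraph.edgeSet_top] at hE
  exact ⟨Set.inter_eq_left.mp hV.symm, Set.inter_eq_left.mp hE.symm⟩

end SimpleGraph

open SimpleGraph

variable {v N : ℕ} {H : SimpleGraph (Fin v)}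

theorem card_image_univ (f : Fin v ↪ Fin N) : #(univ.image f) = v := by
  rw [card_image_of_injective _ f.injective, card_fin]

theorem ncard_verts_copyOverlap (f g : Fin v ↪ Fin N) :
    (H.copyOverlap f g).verts.ncard = #(univ.image f ∩ univ.image g) := by
  rw [← Set.ncard_image_of_injective _ f.injective, image_verts_copyOverlap,
    ← Fintype.coe_image_univ, ← Fintype.coe_image_univ, ← coe_inter, Set.ncard_coe_finset]

variable [DecidableRel H.Adj]

theorem coe_copyEdges (f : Fin v ↪ Fin N) :
    (copyEdges H f : Set (Sym2 (Fin N))) = Sym2.map f '' H.edgeSet := by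
  rw [copyEdges, coe_image, coe_edgeFinset]

theorem card_copyEdges (f : Fin v ↪ Fin N) : #(copyEdges H f) = #H.edgeFinset :=
  card_image_of_injective _ (Sym2.map.injective f.injective)

theorem ncard_edgeSet_copyOverlap (f g : Fin v ↪ Fin N) :
    (H.copyOverlap f g).edgeSet.ncard = #(copyEdges H f ∩ copyEdges H g) := by
  rw [← Set.ncard_image_of_injective _ (Sym2.map.injective f.injective),
    image_edgeSet_copyOverlap, ← coe_copyEdges, ← coe_copyEdges, ← coe_inter, Set.ncard_coe_finset]

theorem copyOverlap_ne_top {f g : Fin v ↪ Fin N}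
    (hne : ¬ (univ.image f = univ.image g ∧ copyEdges H f = copyEdges H g)) :
    H.copyOverlap f g ≠ ⊤ := by
  intro htop
  obtain ⟨hV, hE⟩ := subset_of_copyOverlap_eq_top htop
  refine hne ⟨eq_of_subset_of_card_le ?_ ?_, eq_of_subset_of_card_le ?_ ?_⟩
  · rwa [← coe_subset, Fintype.coe_image_univ, Fintype.coe_image_univ]
  · rw [card_image_univ, card_image_univ]
  · rwa [← coe_subset, coe_copyEdges, coe_copyEdges]
  · rw [card_copyEdges, card_copyEdges]

theorem statement17 (v : ℕ) (H : SimpleGraph (Fin v)) [DecidableRel H.Adj]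
    (hbal : IsStrictlyBalanced H)
    (N : ℕ) (f g : Fin v ↪ Fin N)
    -- the two copies of `H` are distinct as labeled graphs:
    (hne : ¬ (Finset.univ.image ⇑f = Finset.univ.image ⇑g ∧ copyEdges H f = copyEdges H g))
    -- they share at least one edge:
    (hshare : (copyEdges H f ∩ copyEdges H g).Nonempty) :
    (H.edgeFinset.card : ℝ) / v <
      ((copyEdges H f ∪ copyEdges H g).card : ℝ) /
        ((Finset.univ.image ⇑f ∪ Finset.univ.image ⇑g).card : ℝ) := by
  obtain ⟨s, hs⟩ : (H.copyOverlap f g).edgeSet.Nonempty := by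
    apply Set.nonempty_of_ncard_ne_zero
    rw [ncard_edgeSet_copyOverlap]
    exact hshare.card_pos.ne'
  have hverts : 0 < #(univ.image f ∩ univ.image g) := by
    rw [← ncard_verts_copyOverlap (H := H)]
    exact (Set.ncard_pos).mpr ⟨_, Subgraph.mem_verts_of_mem_edge hs (Sym2.out_fst_mem s)⟩
  have hdens := hbal _ (copyOverlap_ne_top hne) ⟨s, hs⟩
  rw [ncard_edgeSet_copyOverlap, ncard_verts_copyOverlap, ← H.coe_edgeFinset,
    Set.ncard_coe_finset] at hdens
  exact div_lt_card_union_div_card_union (card_copyEdges f) (card_copyEdges g)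
    (card_image_univ f) (card_image_univ g) hverts hdens
end
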